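/- arXiv:1705.08814 — 4 statements merged into one kernel-verified Lean document; each statement's English description precedes it below -/
import Mathlib

section
/- Assume θ* ∈ Θ ⊂ Θ_ρ ⊂ interior(Θ_I) ∩ interior(Θ_D) with Θ convex, let ε > 0 with ρ_ε > 0, assume every θ' ∈ Θ_D with ‖θ' − θ*‖ < ρ_ε satisfies μ_{θ'} > μ* − ε, and let f > 0. Fix p ∈ [0,1], η ∈ [0,1), and a finite family (θ*_c)_{c=1,…,C} ⊂ Θ_D with ‖θ*_c − θ*‖ ≥ η ρ_ε and μ_{θ*_c} ≥ μ* − ε for each c, whose cones C̃_p(θ*_c) cover ∇ψ(Θ_ρ \ B(θ*, ρ_ε)). Then for every β ∈ (0,1) and b > 1, writing I = ⌈log_b(βt + β)⌉: Pr_{θ*}( ⋃_{1≤n≤t} { θ̂_n ∈ Θ_ρ and K_inf(θ̂_n, μ* − ε) ≥ f(t/n)/n } ) ≤ Σ_{i=0}^{I−2} Σ_{c=1}^{C} Pr_{θ*}( ⋃_{b^i ≤ n < b^{i+1}} E_{c,p}(n,t) ) + Σ_{c=1}^{C} Pr_{θ*}( ⋃_{n = b^{I−1}}^{t} E_{c,p}(n,t)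 ). -/
open MeasureTheory Real Set Metric ProbabilityTheory
open scoped InnerProductSpace ENNReal BigOperators

noncomputable section

/-- The log-partition function of the exponential family generated by `F` and `ν₀`. -/
noncomputable def psiFun {K : ℕ} (ν₀ : Measure ℝ) (F : ℝ → EuclideanSpace ℝ (Fin K))
    (θ : EuclideanSpace ℝ (Fin K)) : ℝ :=
  Real.log ((∫⁻ x, ENNReal.ofReal (Real.exp ⟪θ, F x⟫_ℝ) ∂ν₀).toReal)

/-- The parameter set `Θ_D` of the family. -/
def ThetaD {K : ℕ} (ν₀ : Measure ℝ) (F : ℝ → EuclideanSpace ℝ (Fin K)) :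
    Set (EuclideanSpace ℝ (Fin K)) :=
  {θ | (∫⁻ x, ENNReal.ofReal (Real.exp ⟪θ, F x⟫_ℝ) ∂ν₀) < ⊤}

/-- The member `ν_θ` of the exponential family. -/
noncomputable def nuP {K : ℕ} (ν₀ : Measure ℝ) (F : ℝ → EuclideanSpace ℝ (Fin K))
    (θ : EuclideanSpace ℝ (Fin K)) : Measure ℝ :=
  ν₀.withDensity (fun x => ENNReal.ofReal (Real.exp (⟪θ, F x⟫_ℝ - psiFun ν₀ F θ)))

/-- The mean `μ_θ` of `ν_θ`. -/
noncomputable def meanP {K : ℕ} (ν₀ : Measure ℝ) (F : ℝ → EuclideanSpace ℝ (Fin K))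
    (θ : EuclideanSpace ℝ (Fin K)) : ℝ :=
  ∫ x, x ∂(nuP ν₀ F θ)

/-- The Bregman divergence `B^ψ(θ, θ') = ψ(θ') - ψ(θ) - ⟨θ' - θ, ∇ψ(θ)⟩`. -/
noncomputable def breg {K : ℕ} (ψ : EuclideanSpace ℝ (Fin K) → ℝ)
    (θ θ' : EuclideanSpace ℝ (Fin K)) : ℝ :=
  ψ θ' - ψ θ - ⟪θ' - θ, gradient ψ θ⟫_ℝ

/-- The Hessian of `ψ` at `θ`. -/
noncomputable def hess {K : ℕ} (ψ : EuclideanSpace ℝ (Fin K) → ℝ)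
    (θ : EuclideanSpace ℝ (Fin K)) : EuclideanSpace ℝ (Fin K) →L[ℝ] EuclideanSpace ℝ (Fin K) :=
  fderiv ℝ (fun x => gradient ψ x) θ

/-- Smallest eigenvalue of a symmetric operator. -/
noncomputable def lamMin {K : ℕ}
    (H : EuclideanSpace ℝ (Fin K) →L[ℝ] EuclideanSpace ℝ (Fin K)) : ℝ :=
  sInf {r | ∃ v : EuclideanSpace ℝ (Fin K), ‖v‖ = 1 ∧ r = ⟪H v, v⟫_ℝ}

/-- Largest eigenvalue of a symmetric operator. -/
noncomputable def lamMax {K : ℕ}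
    (H : EuclideanSpace ℝ (Fin K) →L[ℝ] EuclideanSpace ℝ (Fin K)) : ℝ :=
  sSup {r | ∃ v : EuclideanSpace ℝ (Fin K), ‖v‖ = 1 ∧ r = ⟪H v, v⟫_ℝ}

/-- The invertible parameter set `Θ_I`. -/
def ThetaI {K : ℕ} (ψ : EuclideanSpace ℝ (Fin K) → ℝ) : Set (EuclideanSpace ℝ (Fin K)) :=
  {θ | 0 < lamMin (hess ψ θ) ∧ lamMin (hess ψ θ) ≤ lamMax (hess ψ θ)}

/-- `v_ρ`: infimum of the smallest Hessian eigenvalue over a set of parameters. -/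
noncomputable def vRho {K : ℕ} (ψ : EuclideanSpace ℝ (Fin K) → ℝ)
    (Θρ : Set (EuclideanSpace ℝ (Fin K))) : ℝ :=
  sInf {r | ∃ θ ∈ Θρ, r = lamMin (hess ψ θ)}

/-- `V_ρ`: supremum of the largest Hessian eigenvalue over a set of parameters. -/
noncomputable def VRho {K : ℕ} (ψ : EuclideanSpace ℝ (Fin K) → ℝ)
    (Θρ : Set (EuclideanSpace ℝ (Fin K))) : ℝ :=
  sSup {r | ∃ θ ∈ Θρ, r = lamMax (hess ψ θ)}

/-- The cone `C̃_p(θ) = {y : ⟨θ* - θ, ∇ψ(θ) - y⟩ ≥ p ‖θ* - θ‖ ‖∇ψ(θ) - y‖}`. -/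
def coneC {K : ℕ} (ψ : EuclideanSpace ℝ (Fin K) → ℝ) (θstar : EuclideanSpace ℝ (Fin K))
    (p : ℝ) (θ : EuclideanSpace ℝ (Fin K)) : Set (EuclideanSpace ℝ (Fin K)) :=
  {y | ⟪θstar - θ, gradient ψ θ - y⟫_ℝ ≥ p * ‖θstar - θ‖ * ‖gradient ψ θ - y‖}

/-- `X` is an i.i.d. sequence with common law `ν` under `P`. -/
def IsIID {Ω : Type*} [MeasurableSpace Ω] (P : Measure Ω) (X : ℕ → Ω → ℝ)
    (ν : Measure ℝ) : Prop :=
  (∀ i, Measurable (X i)) ∧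
    iIndepFun X P ∧
    ∀ i, P.map (X i) = ν

/-- The empirical sufficient statistic `F̂_n = (1/n) Σ_{i<n} F(X_i)`. -/
noncomputable def hatF {K : ℕ} {Ω : Type*} (F : ℝ → EuclideanSpace ℝ (Fin K))
    (X : ℕ → Ω → ℝ) (n : ℕ) (ω : Ω) : EuclideanSpace ℝ (Fin K) :=
  (n : ℝ)⁻¹ • ∑ i ∈ Finset.range n, F (X i ω)

/-- `K_inf(θ̂, μ) = inf{B^ψ(θ̂, θ') : θ' ∈ Θ_D, μ_{θ'} ≥ μ}`. -/
noncomputable def Kinf {K : ℕ} (ν₀ : Measure ℝ) (F : ℝ → EuclideanSpace ℝ (Fin K))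
    (θh : EuclideanSpace ℝ (Fin K)) (μ : ℝ) : ℝ :=
  sInf {r | ∃ θ' ∈ ThetaD ν₀ F, meanP ν₀ F θ' ≥ μ ∧ r = breg (psiFun ν₀ F) θh θ'}

/-- `ρ_ε = inf{‖θ' - θ‖ : θ, θ' ∈ Θ_D, μ_θ = μ*, μ_{θ'} = μ* - ε}`. -/
noncomputable def rhoEps {K : ℕ} (ν₀ : Measure ℝ) (F : ℝ → EuclideanSpace ℝ (Fin K))
    (θstar : EuclideanSpace ℝ (Fin K)) (ε : ℝ) : ℝ :=
  sInf {r | ∃ θ ∈ ThetaD ν₀ F, ∃ θ' ∈ ThetaD ν₀ F,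
    meanP ν₀ F θ = meanP ν₀ F θstar ∧ meanP ν₀ F θ' = meanP ν₀ F θstar - ε ∧ r = ‖θ' - θ‖}

/-- The event `E_{c,p}(n,t)`: the empirical parameter lies in `Θ_ρ`, the empirical
sufficient statistic lies in the cone `C̃_p(θ_c)`, and `B^ψ(θ̂_n, θ_c) ≥ f(t/n)/n`. -/
def Ecp {K : ℕ} {Ω : Type*} (ν₀ : Measure ℝ) (F : ℝ → EuclideanSpace ℝ (Fin K))
    (Θρ : Set (EuclideanSpace ℝ (Fin K))) (θstar θc : EuclideanSpace ℝ (Fin K)) (p : ℝ)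
    (f : ℝ → ℝ) (X : ℕ → Ω → ℝ) (t n : ℕ) : Set Ω :=
  {ω | (∃ θh ∈ Θρ, gradient (psiFun ν₀ F) θh = hatF F X n ω ∧
          breg (psiFun ν₀ F) θh θc ≥ f ((t : ℝ) / (n : ℝ)) / (n : ℝ)) ∧
        hatF F X n ω ∈ coneC (psiFun ν₀ F) θstar p θc}

/-!
If `θ̂` lay within `ρ_ε` of `θ*`, the open segment from `θ*` to `θ̂` would stay in the convex set
`Θ_ρ` and in the ball where `μ_θ > μ* - ε`, so every point of it competes in `K_inf(θ̂, μ* - ε)`.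
Along the segment `B^ψ(θ̂, ·) → B^ψ(θ̂, θ̂) = 0`, because `ψ` is convex (Hölder) and hence
continuous on the interior of `Θ_D`; this forces `K_inf(θ̂, μ* - ε) ≤ 0 < f(t/n)/n`. So `θ̂` lies
outside the ball, `∇ψ(θ̂) = F̂_n` falls into some cone `C̃_p(θ*_c)`, and `B^ψ(θ̂, θ*_c) ≥ K_inf`
because `θ*_c` is itself admissible. Each event thus lies in `⋃_c E_{c,p}(n,t)`; splitting
`1 ≤ n ≤ t` into the blocks `[b^i, b^{i+1})`, `i < I - 1`, and the tail `[b^{I-1}, t]`, the union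
bound concludes.
-/

open Filter Topology

def partitionFn {K : ℕ} (ν₀ : Measure ℝ) (F : ℝ → EuclideanSpace ℝ (Fin K))
    (θ : EuclideanSpace ℝ (Fin K)) : ℝ≥0∞ :=
  ∫⁻ x, ENNReal.ofReal (Real.exp ⟪θ, F x⟫_ℝ) ∂ν₀

section LogPartition

variable {K : ℕ} {ν₀ : Measure ℝ} {F : ℝ → EuclideanSpace ℝ (Fin K)}

theorem measurable_ofReal_exp_inner (hF : Measurable F) (θ : EuclideanSpace ℝ (Fin K)) :
    Measurable fun x => ENNReal.ofReal (Real.exp ⟪θ, F x⟫_ℝ) := by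
  fun_prop

theorem partitionFn_smul_add_le (hF : Measurable F) (θ₁ θ₂ : EuclideanSpace ℝ (Fin K))
    {a c : ℝ} (ha : 0 ≤ a) (hc : 0 ≤ c) (hac : a + c = 1) :
    partitionFn ν₀ F (a • θ₁ + c • θ₂) ≤ partitionFn ν₀ F θ₁ ^ a * partitionFn ν₀ F θ₂ ^ c := by
  calc partitionFn ν₀ F (a • θ₁ + c • θ₂)
      = ∫⁻ x, ENNReal.ofReal (Real.exp ⟪θ₁, F x⟫_ℝ) ^ a
          * ENNReal.ofReal (Real.exp ⟪θ₂, F x⟫_ℝ) ^ c ∂ν₀ := by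
        refine lintegral_congr fun x => ?_
        rw [inner_add_left, real_inner_smul_left, real_inner_smul_left, Real.exp_add,
          mul_comm a, mul_comm c, Real.exp_mul, Real.exp_mul, ENNReal.ofReal_mul (by positivity),
          ENNReal.ofReal_rpow_of_pos (Real.exp_pos _), ENNReal.ofReal_rpow_of_pos (Real.exp_pos _)]
    _ ≤ _ := ENNReal.lintegral_mul_norm_pow_le (measurable_ofReal_exp_inner hF θ₁).aemeasurable
        (measurable_ofReal_exp_inner hF θ₂).aemeasurable ha hc hac

theorem partitionFn_ne_zero (hF : Measurable F) (hν : ν₀ ≠ 0) (θ : EuclideanSpace ℝ (Fin K)) :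
    partitionFn ν₀ F θ ≠ 0 := by
  intro h
  have : (ae ν₀).NeBot := ae_neBot.mpr hν
  obtain ⟨x, hx⟩ := ((lintegral_eq_zero_iff (measurable_ofReal_exp_inner hF θ)).mp h).exists
  exact (ENNReal.ofReal_pos.mpr (Real.exp_pos _)).ne' hx

theorem convex_ThetaD (hF : Measurable F) : Convex ℝ (ThetaD ν₀ F) :=
  fun θ₁ h₁ θ₂ h₂ _ _ ha hc hac => (partitionFn_smul_add_le hF θ₁ θ₂ ha hc hac).trans_lt
    (ENNReal.mul_lt_top (ENNReal.rpow_lt_top_of_nonneg ha h₁.ne)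
      (ENNReal.rpow_lt_top_of_nonneg hc h₂.ne))

theorem psiFun_convexOn (hF : Measurable F) : ConvexOn ℝ (ThetaD ν₀ F) (psiFun ν₀ F) := by
  refine ⟨convex_ThetaD hF, fun θ₁ h₁ θ₂ h₂ a c ha hc hac => ?_⟩
  rcases eq_or_ne ν₀ 0 with rfl | hν
  · simp [psiFun]
  have hpos : ∀ θ ∈ ThetaD ν₀ F, 0 < (partitionFn ν₀ F θ).toReal := fun θ hθ =>
    ENNReal.toReal_pos (partitionFn_ne_zero hF hν θ) hθ.ne
  have hZ : (partitionFn ν₀ F (a • θ₁ + c • θ₂)).toReal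
      ≤ (partitionFn ν₀ F θ₁).toReal ^ a * (partitionFn ν₀ F θ₂).toReal ^ c := by
    rw [ENNReal.toReal_rpow, ENNReal.toReal_rpow, ← ENNReal.toReal_mul]
    exact ENNReal.toReal_mono (ENNReal.mul_ne_top (ENNReal.rpow_ne_top_of_nonneg ha h₁.ne)
      (ENNReal.rpow_ne_top_of_nonneg hc h₂.ne)) (partitionFn_smul_add_le hF θ₁ θ₂ ha hc hac)
  calc psiFun ν₀ F (a • θ₁ + c • θ₂)
      ≤ Real.log ((partitionFn ν₀ F θ₁).toReal ^ a * (partitionFn ν₀ F θ₂).toReal ^ c) :=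
        Real.log_le_log (hpos _ (convex_ThetaD hF h₁ h₂ ha hc hac)) hZ
    _ = a • psiFun ν₀ F θ₁ + c • psiFun ν₀ F θ₂ := by
        rw [Real.log_mul (Real.rpow_pos_of_pos (hpos _ h₁) a).ne'
          (Real.rpow_pos_of_pos (hpos _ h₂) c).ne', Real.log_rpow (hpos _ h₁),
          Real.log_rpow (hpos _ h₂)]
        rfl

end LogPartition

theorem Convex.mem_closure_of_inter_ball_subset {E : Type*} [NormedAddCommGroup E]
    [NormedSpace ℝ E] {T A : Set E} (hT : Convex ℝ T) {x y : E} {r : ℝ} (hr : 0 < r)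
    (hx : x ∈ T) (hy : y ∈ T) (hyr : y ∈ closedBall x r) (hA : T ∩ ball x r ⊆ A) :
    y ∈ closure A := by
  have hball : openSegment ℝ x y ⊆ ball x r := by
    simpa only [isOpen_ball.interior_eq] using
      (convex_ball x r).openSegment_interior_closure_subset_interior
        (by simpa only [isOpen_ball.interior_eq] using mem_ball_self hr)
        (by rwa [closure_ball x hr.ne'])
  exact closure_mono ((subset_inter (hT.openSegment_subset hx hy) hball).trans hA)
    (segment_subset_closure_openSegment (right_mem_segment ℝ x y))

section Bregman

variable {K : ℕ}

theorem breg_self (ψ : EuclideanSpace ℝ (Fin K) → ℝ) (θ : EuclideanSpace ℝ (Fin K)) :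
    breg ψ θ θ = 0 := by
  simp [breg]

theorem tendsto_breg_self {ψ : EuclideanSpace ℝ (Fin K) → ℝ} {θ : EuclideanSpace ℝ (Fin K)}
    (hψ : ContinuousAt ψ θ) : Tendsto (breg ψ θ) (𝓝 θ) (𝓝 0) := by
  have hcont : ContinuousAt (breg ψ θ) θ :=
    (hψ.sub continuousAt_const).sub
      ((continuous_id.sub continuous_const).inner continuous_const).continuousAt
  simpa only [breg_self] using hcont.tendsto

end Bregman

section Kinf

variable {K : ℕ} {ν₀ : Measure ℝ} {F : ℝ → EuclideanSpace ℝ (Fin K)}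

theorem le_breg_of_le_Kinf {θh θ' : EuclideanSpace ℝ (Fin K)} {μ δ : ℝ} (hδ : 0 < δ)
    (hK : δ ≤ Kinf ν₀ F θh μ) (hθ' : θ' ∈ ThetaD ν₀ F) (hμ : μ ≤ meanP ν₀ F θ') :
    δ ≤ breg (psiFun ν₀ F) θh θ' := by
  have hbdd : BddBelow {r | ∃ θ' ∈ ThetaD ν₀ F, meanP ν₀ F θ' ≥ μ ∧
      r = breg (psiFun ν₀ F) θh θ'} := by
    by_contra h
    rw [Kinf, Real.sInf_of_not_bddBelow h] at hK
    exact hδ.not_ge hK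
  exact hK.trans (csInf_le hbdd ⟨θ', hθ', hμ, rfl⟩)

theorem Kinf_nonpos_of_mem_closure {θh : EuclideanSpace ℝ (Fin K)} {μ : ℝ}
    (hψ : ContinuousAt (psiFun ν₀ F) θh)
    (hθh : θh ∈ closure {θ' | θ' ∈ ThetaD ν₀ F ∧ μ ≤ meanP ν₀ F θ'}) :
    Kinf ν₀ F θh μ ≤ 0 := by
  set A := {θ' | θ' ∈ ThetaD ν₀ F ∧ μ ≤ meanP ν₀ F θ'}
  by_cases hbdd : BddBelow {r | ∃ θ' ∈ ThetaD ν₀ F, meanP ν₀ F θ' ≥ μ ∧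
      r = breg (psiFun ν₀ F) θh θ'}
  · have := mem_closure_iff_nhdsWithin_neBot.mp hθh
    refine ge_of_tendsto ((tendsto_breg_self hψ).mono_left (nhdsWithin_le_nhds (s := A))) ?_
    filter_upwards [self_mem_nhdsWithin] with θ' hθ'
    exact csInf_le hbdd ⟨θ', hθ'.1, hθ'.2, rfl⟩
  · exact (Real.sInf_of_not_bddBelow hbdd).le

variable {T : Set (EuclideanSpace ℝ (Fin K))} {θstar : EuclideanSpace ℝ (Fin K)} {r μ : ℝ}

theorem not_mem_closedBall_of_le_Kinf (hF : Measurable F) (hT : Convex ℝ T) (hθT : θstar ∈ T)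
    (hTD : T ⊆ interior (ThetaD ν₀ F)) (hr : 0 < r)
    (hgap : ∀ θ' ∈ ThetaD ν₀ F, ‖θ' - θstar‖ < r → meanP ν₀ F θ' > μ)
    {θh : EuclideanSpace ℝ (Fin K)} (hθh : θh ∈ T) {δ : ℝ} (hδ : 0 < δ)
    (hK : δ ≤ Kinf ν₀ F θh μ) : θh ∉ closedBall θstar r := by
  intro hball
  have hψ : ContinuousAt (psiFun ν₀ F) θh :=
    (psiFun_convexOn hF).continuousOn_interior.continuousAt
      (isOpen_interior.mem_nhds (hTD hθh))
  have hcl : θh ∈ closure {θ' | θ' ∈ ThetaD ν₀ F ∧ μ ≤ meanP ν₀ F θ'} :=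
    hT.mem_closure_of_inter_ball_subset hr hθT hθh hball fun θ' ⟨hθ'T, hθ'r⟩ =>
      have hθ'D := interior_subset (hTD hθ'T)
      ⟨hθ'D, (hgap θ' hθ'D (mem_ball_iff_norm.mp hθ'r)).le⟩
  exact hδ.not_ge (hK.trans (Kinf_nonpos_of_mem_closure hψ hcl))

theorem setOf_le_Kinf_subset_iUnion_Ecp {Ω : Type*} (hF : Measurable F) (hT : Convex ℝ T)
    (hθT : θstar ∈ T) (hTD : T ⊆ interior (ThetaD ν₀ F)) (hr : 0 < r)
    (hgap : ∀ θ' ∈ ThetaD ν₀ F, ‖θ' - θstar‖ < r → meanP ν₀ F θ' > μ)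
    {f : ℝ → ℝ} (hf : ∀ x, 0 < f x) {p : ℝ} {C : ℕ} {θs : Fin C → EuclideanSpace ℝ (Fin K)}
    (hθs : ∀ c, θs c ∈ ThetaD ν₀ F ∧ μ ≤ meanP ν₀ F (θs c))
    (hcover : gradient (psiFun ν₀ F) '' (T \ closedBall θstar r)
      ⊆ ⋃ c : Fin C, coneC (psiFun ν₀ F) θstar p (θs c))
    (X : ℕ → Ω → ℝ) {t n : ℕ} (hn : 1 ≤ n) :
    {ω | ∃ θh ∈ T, gradient (psiFun ν₀ F) θh = hatF F X n ω ∧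
        Kinf ν₀ F θh μ ≥ f ((t : ℝ) / (n : ℝ)) / (n : ℝ)}
      ⊆ ⋃ c : Fin C, Ecp ν₀ F T θstar (θs c) p f X t n := by
  rintro ω ⟨θh, hθh, hgrad, hK⟩
  have hδ : 0 < f ((t : ℝ) / (n : ℝ)) / (n : ℝ) := div_pos (hf _) (Nat.cast_pos.mpr hn)
  obtain ⟨c, hc⟩ := mem_iUnion.mp <| hcover
    ⟨θh, ⟨hθh, not_mem_closedBall_of_le_Kinf hF hT hθT hTD hr hgap hθh hδ hK⟩, hgrad⟩
  exact mem_iUnion.mpr ⟨c, ⟨θh, hθh, hgrad, le_breg_of_le_Kinf hδ hK (hθs c).1 (hθs c).2⟩, hc⟩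

end Kinf

theorem exists_pow_le_lt_or_zpow_le {b x : ℝ} (hb : 1 < b) (hx : 1 ≤ x) (I : ℤ) :
    (∃ i < I.toNat, b ^ i ≤ x ∧ x < b ^ (i + 1)) ∨ b ^ I ≤ x := by
  obtain ⟨i, hi, hi'⟩ := exists_nat_pow_near hx hb
  rcases lt_or_ge i I.toNat with h | h
  · exact .inl ⟨i, h, hi, hi'⟩
  · refine .inr (le_trans ?_ hi)
    calc b ^ I ≤ b ^ (i : ℤ) := zpow_le_zpow_right₀ hb.le (by omega)
      _ = b ^ i := zpow_natCast b i

theorem measure_biUnion_le_sum_peeling {Ω : Type*} [MeasurableSpace Ω] (P : Measure Ω)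
    {ι : Type*} [Fintype ι] (E : ι → ℕ → Set Ω) {b : ℝ} (hb : 1 < b) (I : ℤ) (t : ℕ) :
    P (⋃ n ∈ {n : ℕ | 1 ≤ n ∧ n ≤ t}, ⋃ c, E c n)
      ≤ (∑ i ∈ Finset.range I.toNat, ∑ c,
            P (⋃ n ∈ {n : ℕ | b ^ i ≤ (n : ℝ) ∧ (n : ℝ) < b ^ (i + 1)}, E c n))
        + ∑ c, P (⋃ n ∈ {n : ℕ | b ^ I ≤ (n : ℝ) ∧ n ≤ t}, E c n) := by
  have hsets : (⋃ n ∈ {n : ℕ | 1 ≤ n ∧ n ≤ t}, ⋃ c, E c n)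
      ⊆ (⋃ i ∈ Finset.range I.toNat, ⋃ c,
          ⋃ n ∈ {n : ℕ | b ^ i ≤ (n : ℝ) ∧ (n : ℝ) < b ^ (i + 1)}, E c n)
        ∪ ⋃ c, ⋃ n ∈ {n : ℕ | b ^ I ≤ (n : ℝ) ∧ n ≤ t}, E c n := by
    simp only [subset_def, mem_union, mem_iUnion, mem_ofPred_eq, Finset.mem_range, exists_prop]
    rintro ω ⟨n, ⟨hn1, hnt⟩, c, hω⟩
    rcases exists_pow_le_lt_or_zpow_le hb (Nat.one_le_cast.mpr hn1) I with ⟨i, hi, hin⟩ | hIn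
    · exact .inl ⟨i, hi, c, n, hin, hω⟩
    · exact .inr ⟨c, n, ⟨hIn, hnt⟩, hω⟩
  calc _ ≤ _ := measure_mono hsets
    _ ≤ _ := measure_union_le _ _
    _ ≤ _ := add_le_add ((measure_biUnion_finset_le _ _).trans
        (Finset.sum_le_sum fun i _ => measure_iUnion_fintype_le _ _))
        (measure_iUnion_fintype_le _ _)

theorem peeling_and_covering_general {K : ℕ} (ν₀ : Measure ℝ)
    (F : ℝ → EuclideanSpace ℝ (Fin K)) (hF : Measurable F)
    (Θ : Set (EuclideanSpace ℝ (Fin K))) (hΘconv : Convex ℝ Θ) (ρ : ℝ) (hρ : 0 < ρ)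
    (θstar : EuclideanSpace ℝ (Fin K)) (hθΘ : θstar ∈ Θ)
    (hsub : thickening ρ Θ ⊆ interior (ThetaI (psiFun ν₀ F)) ∩ interior (ThetaD ν₀ F))
    (ε : ℝ) (hρε : 0 < rhoEps ν₀ F θstar ε)
    (hgap : ∀ θ' ∈ ThetaD ν₀ F, ‖θ' - θstar‖ < rhoEps ν₀ F θstar ε →
      meanP ν₀ F θ' > meanP ν₀ F θstar - ε)
    (f : ℝ → ℝ) (hf : ∀ x, 0 < f x)
    (p : ℝ) (η : ℝ)
    (C : ℕ) (θs : Fin C → EuclideanSpace ℝ (Fin K))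
    (hθs : ∀ c, θs c ∈ ThetaD ν₀ F ∧ ‖θs c - θstar‖ ≥ η * rhoEps ν₀ F θstar ε ∧
      meanP ν₀ F (θs c) ≥ meanP ν₀ F θstar - ε)
    (hcover : gradient (psiFun ν₀ F) ''
        (thickening ρ Θ \ closedBall θstar (rhoEps ν₀ F θstar ε))
      ⊆ ⋃ c : Fin C, coneC (psiFun ν₀ F) θstar p (θs c))
    {Ω : Type*} [MeasurableSpace Ω] (P : Measure Ω)
    (X : ℕ → Ω → ℝ)
    (t : ℕ) (β : ℝ) (b : ℝ) (hb : 1 < b) :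
    P (⋃ n ∈ {n : ℕ | 1 ≤ n ∧ n ≤ t},
        {ω | ∃ θh ∈ thickening ρ Θ, gradient (psiFun ν₀ F) θh = hatF F X n ω ∧
          Kinf ν₀ F θh (meanP ν₀ F θstar - ε) ≥ f ((t : ℝ) / (n : ℝ)) / (n : ℝ)})
      ≤ (∑ i ∈ Finset.range (⌈Real.logb b (β * t + β)⌉ - 1).toNat, ∑ c : Fin C,
            P (⋃ n ∈ {n : ℕ | (b : ℝ) ^ i ≤ (n : ℝ) ∧ (n : ℝ) < b ^ (i + 1)},
                Ecp ν₀ F (thickening ρ Θ) θstar (θs c) p f X t n))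
          + ∑ c : Fin C,
            P (⋃ n ∈ {n : ℕ | b ^ (⌈Real.logb b (β * t + β)⌉ - 1) ≤ (n : ℝ) ∧ n ≤ t},
                Ecp ν₀ F (thickening ρ Θ) θstar (θs c) p f X t n) := by
  have hcovered := fun n (hn : n ∈ {n : ℕ | 1 ≤ n ∧ n ≤ t}) =>
    setOf_le_Kinf_subset_iUnion_Ecp (t := t) hF (hΘconv.thickening ρ)
      (self_subset_thickening hρ Θ hθΘ) (hsub.trans inter_subset_right) hρε hgap hf
      (fun c => ⟨(hθs c).1, (hθs c).2.2⟩) hcover X hn.1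
  exact (measure_mono (iUnion₂_mono hcovered)).trans
    (measure_biUnion_le_sum_peeling P _ hb _ t)

/-- Peeling and cone covering decomposition. -/
theorem peeling_and_covering {K : ℕ} (hK : 1 ≤ K) (ν₀ : Measure ℝ) [SigmaFinite ν₀]
    (F : ℝ → EuclideanSpace ℝ (Fin K)) (hF : Measurable F)
    (Θ : Set (EuclideanSpace ℝ (Fin K))) (hΘconv : Convex ℝ Θ) (ρ : ℝ) (hρ : 0 < ρ)
    (θstar : EuclideanSpace ℝ (Fin K)) (hθΘ : θstar ∈ Θ)
    (hsub : thickening ρ Θ ⊆ interior (ThetaI (psiFun ν₀ F)) ∩ interior (ThetaD ν₀ F))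
    (ε : ℝ) (hε : 0 < ε) (hρε : 0 < rhoEps ν₀ F θstar ε)
    (hgap : ∀ θ' ∈ ThetaD ν₀ F, ‖θ' - θstar‖ < rhoEps ν₀ F θstar ε →
      meanP ν₀ F θ' > meanP ν₀ F θstar - ε)
    (f : ℝ → ℝ) (hf : ∀ x, 0 < f x)
    (p : ℝ) (hp : p ∈ Set.Icc (0:ℝ) 1) (η : ℝ) (hη : η ∈ Set.Ico (0:ℝ) 1)
    (C : ℕ) (θs : Fin C → EuclideanSpace ℝ (Fin K))
    (hθs : ∀ c, θs c ∈ ThetaD ν₀ F ∧ ‖θs c - θstar‖ ≥ η * rhoEps ν₀ F θstar ε ∧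
      meanP ν₀ F (θs c) ≥ meanP ν₀ F θstar - ε)
    (hcover : gradient (psiFun ν₀ F) ''
        (thickening ρ Θ \ closedBall θstar (rhoEps ν₀ F θstar ε))
      ⊆ ⋃ c : Fin C, coneC (psiFun ν₀ F) θstar p (θs c))
    {Ω : Type*} [MeasurableSpace Ω] (P : Measure Ω) [IsProbabilityMeasure P]
    (X : ℕ → Ω → ℝ) (hX : IsIID P X (nuP ν₀ F θstar))
    (t : ℕ) (ht : 1 ≤ t) (β : ℝ) (hβ : β ∈ Set.Ioo (0:ℝ) 1) (b : ℝ) (hb : 1 < b) :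
    P (⋃ n ∈ {n : ℕ | 1 ≤ n ∧ n ≤ t},
        {ω | ∃ θh ∈ thickening ρ Θ, gradient (psiFun ν₀ F) θh = hatF F X n ω ∧
          Kinf ν₀ F θh (meanP ν₀ F θstar - ε) ≥ f ((t : ℝ) / (n : ℝ)) / (n : ℝ)})
      ≤ (∑ i ∈ Finset.range (⌈Real.logb b (β * t + β)⌉ - 1).toNat, ∑ c : Fin C,
            P (⋃ n ∈ {n : ℕ | (b : ℝ) ^ i ≤ (n : ℝ) ∧ (n : ℝ) < b ^ (i + 1)},
                Ecp ν₀ F (thickening ρ Θ) θstar (θs c) p f X t n))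
          + ∑ c : Fin C,
            P (⋃ n ∈ {n : ℕ | b ^ (⌈Real.logb b (β * t + β)⌉ - 1) ≤ (n : ℝ) ∧ n ≤ t},
                Ecp ν₀ F (thickening ρ Θ) θstar (θs c) p f X t n) :=
  peeling_and_covering_general ν₀ F hF Θ hΘconv ρ hρ θstar hθΘ hsub ε hρε hgap f hf p η C θs hθs
    hcover P X t β b hb
end
end

section
/- Assume θ* ∈ Θ ⊂ Θ_ρ ⊂ interior(Θ_I) ∩ interior(Θ_D) with Θ convex, let ε > 0 with ρ_ε > 0, and let θ*_c ∈ Θ_ρ ∩ Θ_D with ‖θ* − θ*_c‖ ≥ η ρ_ε, where p ∈ [0,1], η ∈ (0,1]. Let f ≥ 0 be such that n ↦ n·f(t/n) is non-decreasing. Then for any integers 1 ≤ n_i < n_{i+1}: Pr_{θ*}( ⋃_{n=n_i}^{n_{i+1}−1} E_{c,p}(n,t) ) ≤ exp( −n_i α² − χ √(n_i f(t/n_i)) ) · Pr_{θ*_c}( ⋃_{n=n_i}^{n_{i+1}−1} E_{c,p}(n,t) ), where α = η ρ_ε √(v_ρ/2) and χ = p η ρ_ε √(2 v_ρ²/V_ρ).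 -/
/-!
Under `Pr_{θ*}` the first `n` observations have density
`∏ᵢ exp(⟨θ* - θ*_c, F(Xᵢ)⟩ - (ψ(θ*) - ψ(θ*_c))) = exp(n⟨θ* - θ*_c, F̂_n⟩ - n(ψ(θ*) - ψ(θ*_c)))`
with respect to their law under `Pr_{θ*_c}`. Writing `F̂_n = ∇ψ(θ̂_n)`, the exponent is
`-n⟨θ* - θ*_c, ∇ψ(θ*_c) - ∇ψ(θ̂_n)⟩ - n B^ψ(θ*_c, θ*)`. Strong convexity of `ψ` on `Θ_ρ`
bounds the Bregman term below by `n_i α²`. On the cone `C̃_p(θ*_c)` the inner product is at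
least `p ‖θ* - θ*_c‖ ‖∇ψ(θ*_c) - ∇ψ(θ̂_n)‖`, and strong monotonicity of `∇ψ`, the upper Hessian
bound and `B^ψ(θ̂_n, θ*_c) ≥ f(t/n)/n` make this at least `χ √(n_i f(t/n_i))`.
Each event depends only on the first `n` observations, so cutting the union into the disjoint
pieces `E(n) \ ⋃_{m<n} E(m)` lets the likelihood-ratio bound be applied piece by piece.
-/

open MeasureTheory Real Set Metric ProbabilityTheory
open scoped InnerProductSpace ENNReal BigOperators

noncomputable section

section Rayleigh

variable {K : ℕ}

local notation "E" => EuclideanSpace ℝ (Fin K)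

lemma isBounded_rayleigh (H : E →L[ℝ] E) :
    Bornology.IsBounded {r | ∃ v : E, ‖v‖ = 1 ∧ r = ⟪H v, v⟫_ℝ} := by
  refine (Metric.isBounded_closedBall (x := (0 : ℝ)) (r := ‖H‖)).subset ?_
  rintro r ⟨v, hv, rfl⟩
  rw [mem_closedBall_zero_iff, Real.norm_eq_abs]
  calc |⟪H v, v⟫_ℝ| ≤ ‖H v‖ * ‖v‖ := abs_real_inner_le_norm _ _
    _ ≤ ‖H‖ * ‖v‖ * ‖v‖ := by gcongr; exact H.le_opNorm v
    _ = ‖H‖ := by rw [hv, mul_one, mul_one]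

lemma inner_div_sq_norm_mem_rayleigh (H : E →L[ℝ] E) {w : E} (hw : w ≠ 0) :
    ⟪H w, w⟫_ℝ / ‖w‖ ^ 2 ∈ {r | ∃ v : E, ‖v‖ = 1 ∧ r = ⟪H v, v⟫_ℝ} := by
  have hw' : ‖w‖ ≠ 0 := norm_ne_zero_iff.2 hw
  refine ⟨‖w‖⁻¹ • w, ?_, ?_⟩
  · rw [norm_smul, norm_inv, norm_norm, inv_mul_cancel₀ hw']
  · rw [map_smul, real_inner_smul_left, real_inner_smul_right]
    field_simp

lemma lamMin_mul_sq_norm_le (H : E →L[ℝ] E) (w : E) :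
    lamMin H * ‖w‖ ^ 2 ≤ ⟪H w, w⟫_ℝ := by
  rcases eq_or_ne w 0 with rfl | hw
  · simp
  · rw [← le_div_iff₀ (by positivity)]
    exact csInf_le (isBounded_rayleigh H).bddBelow (inner_div_sq_norm_mem_rayleigh H hw)

lemma inner_le_lamMax_mul_sq_norm (H : E →L[ℝ] E) (w : E) :
    ⟪H w, w⟫_ℝ ≤ lamMax H * ‖w‖ ^ 2 := by
  rcases eq_or_ne w 0 with rfl | hw
  · simp
  · rw [← div_le_iff₀ (by positivity)]
    exact le_csSup (isBounded_rayleigh H).bddAbove (inner_div_sq_norm_mem_rayleigh H hw)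

lemma lamMin_zero : lamMin (0 : E →L[ℝ] E) = 0 := by
  have hzero : ∀ r ∈ {r | ∃ v : E, ‖v‖ = 1 ∧ r = ⟪(0 : E →L[ℝ] E) v, v⟫_ℝ}, r = 0 := by
    rintro r ⟨v, -, rfl⟩
    simp
  exact le_antisymm (Real.sInf_nonpos fun r hr => (hzero r hr).le)
    (Real.sInf_nonneg fun r hr => (hzero r hr).ge)

end Rayleigh

section ConvexTaylor

variable {E : Type*} [NormedAddCommGroup E] [InnerProductSpace ℝ E]
  {U : Set E} {ψ : E → ℝ} {g : E → E} {v : ℝ}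

lemma hasDerivAt_add_smul (a d : E) (s : ℝ) : HasDerivAt (fun s : ℝ => a + s • d) d s := by
  simpa using ((hasDerivAt_id s).smul_const d).const_add a

lemma Convex.mul_sq_norm_le_inner_sub (hU : Convex ℝ U)
    (hg : ∀ θ ∈ U, DifferentiableAt ℝ g θ)
    (hv : ∀ θ ∈ U, ∀ w, v * ‖w‖ ^ 2 ≤ ⟪fderiv ℝ g θ w, w⟫_ℝ)
    {a b : E} (ha : a ∈ U) (hb : b ∈ U) :
    v * ‖a - b‖ ^ 2 ≤ ⟪g a - g b, a - b⟫_ℝ := by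
  set d := a - b
  have hmem : ∀ s ∈ Icc (0 : ℝ) 1, b + s • d ∈ U := fun s hs =>
    hU.add_smul_sub_mem hb ha hs
  have hderiv : ∀ s ∈ Icc (0 : ℝ) 1, HasDerivAt (fun s => ⟪d, g (b + s • d)⟫_ℝ)
      ⟪d, fderiv ℝ g (b + s • d) d⟫_ℝ s := fun s hs =>
    (innerSL ℝ d).hasFDerivAt.comp_hasDerivAt s
      ((hg _ (hmem s hs)).hasFDerivAt.comp_hasDerivAt s (hasDerivAt_add_smul b d s))
  obtain ⟨c, hc, hslope⟩ := exists_hasDerivAt_eq_slope _ _ one_pos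
    (fun s hs => (hderiv s hs).continuousAt.continuousWithinAt)
    (fun s hs => hderiv s (Ioo_subset_Icc_self hs))
  have hcd := hv _ (hmem c (Ioo_subset_Icc_self hc)) d
  rw [real_inner_comm, hslope, one_smul, zero_smul, add_zero, add_sub_cancel, sub_zero, div_one,
    ← inner_sub_right, real_inner_comm] at hcd
  exact hcd

lemma Convex.mul_norm_le_norm_sub (hU : Convex ℝ U)
    (hg : ∀ θ ∈ U, DifferentiableAt ℝ g θ)
    (hv : ∀ θ ∈ U, ∀ w, v * ‖w‖ ^ 2 ≤ ⟪fderiv ℝ g θ w, w⟫_ℝ)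
    {a b : E} (ha : a ∈ U) (hb : b ∈ U) :
    v * ‖a - b‖ ≤ ‖g a - g b‖ := by
  rcases (norm_nonneg (a - b)).eq_or_lt with h0 | hpos
  · rw [← h0, mul_zero]
    exact norm_nonneg _
  · refine le_of_mul_le_mul_right ?_ hpos
    calc v * ‖a - b‖ * ‖a - b‖ = v * ‖a - b‖ ^ 2 := by ring
      _ ≤ ⟪g a - g b, a - b⟫_ℝ := hU.mul_sq_norm_le_inner_sub hg hv ha hb
      _ ≤ ‖g a - g b‖ * ‖a - b‖ := real_inner_le_norm _ _

lemma Convex.div_two_mul_sq_norm_le_sub_sub_inner [CompleteSpace E] (hU : Convex ℝ U)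
    (hψ : ∀ θ ∈ U, HasGradientAt ψ (g θ) θ)
    (hg : ∀ θ ∈ U, DifferentiableAt ℝ g θ)
    (hv : ∀ θ ∈ U, ∀ w, v * ‖w‖ ^ 2 ≤ ⟪fderiv ℝ g θ w, w⟫_ℝ)
    {a b : E} (ha : a ∈ U) (hb : b ∈ U) :
    v / 2 * ‖a - b‖ ^ 2 ≤ ψ a - ψ b - ⟪a - b, g b⟫_ℝ := by
  set d := a - b
  have hmem : ∀ s ∈ Icc (0 : ℝ) 1, b + s • d ∈ U := fun s hs =>
    hU.add_smul_sub_mem hb ha hs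
  set φ : ℝ → ℝ := fun s => ψ (b + s • d) - s * ⟪d, g b⟫_ℝ - v / 2 * s ^ 2 * ‖d‖ ^ 2
  have hderiv : ∀ s ∈ Icc (0 : ℝ) 1,
      HasDerivAt φ (⟪g (b + s • d), d⟫_ℝ - ⟪d, g b⟫_ℝ - v * s * ‖d‖ ^ 2) s := by
    intro s hs
    have hψs : HasDerivAt (fun s : ℝ => ψ (b + s • d)) ⟪g (b + s • d), d⟫_ℝ s :=
      (hψ _ (hmem s hs)).hasFDerivAt.comp_hasDerivAt (f := fun s : ℝ => b + s • d) s
        (hasDerivAt_add_smul b d s)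
    have hlin : HasDerivAt (fun s : ℝ => s * ⟪d, g b⟫_ℝ) ⟪d, g b⟫_ℝ s := by
      simpa using (hasDerivAt_id s).mul_const ⟪d, g b⟫_ℝ
    have hsq : HasDerivAt (fun s : ℝ => v / 2 * s ^ 2 * ‖d‖ ^ 2) (v * s * ‖d‖ ^ 2) s :=
      (((hasDerivAt_pow 2 s).const_mul (v / 2)).mul_const (‖d‖ ^ 2)).congr_deriv (by
        simp only [Nat.cast_ofNat, Nat.add_one_sub_one, pow_one]
        ring)
    exact (hψs.sub hlin).sub hsq
  obtain ⟨c, hc, hslope⟩ := exists_hasDerivAt_eq_slope φ _ one_pos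
    (fun s hs => (hderiv s hs).continuousAt.continuousWithinAt)
    (fun s hs => hderiv s (Ioo_subset_Icc_self hs))
  -- strong monotonicity between `b + c • d` and `b`, divided by `c > 0`
  have hmono := hU.mul_sq_norm_le_inner_sub hg hv
    (hmem c (Ioo_subset_Icc_self hc)) hb
  rw [add_sub_cancel_left, norm_smul, Real.norm_of_nonneg hc.1.le, real_inner_smul_right,
    inner_sub_left, real_inner_comm d (g b)] at hmono
  have hslope_nonneg : 0 ≤ (φ 1 - φ 0) / (1 - 0) := by
    rw [← hslope]
    nlinarith [hc.1]
  simp only [φ, one_smul, zero_smul, add_zero, one_pow, mul_one, one_mul, zero_mul,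
    zero_pow two_ne_zero, mul_zero, sub_zero, div_one] at hslope_nonneg
  rw [add_sub_cancel] at hslope_nonneg
  linarith

lemma Convex.sub_sub_inner_le_div_two_mul_sq_norm [CompleteSpace E] {V : ℝ}
    (hU : Convex ℝ U)
    (hψ : ∀ θ ∈ U, HasGradientAt ψ (g θ) θ)
    (hg : ∀ θ ∈ U, DifferentiableAt ℝ g θ)
    (hV : ∀ θ ∈ U, ∀ w, ⟪fderiv ℝ g θ w, w⟫_ℝ ≤ V * ‖w‖ ^ 2)
    {a b : E} (ha : a ∈ U) (hb : b ∈ U) :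
    ψ a - ψ b - ⟪a - b, g b⟫_ℝ ≤ V / 2 * ‖a - b‖ ^ 2 := by
  have hneg := hU.div_two_mul_sq_norm_le_sub_sub_inner (ψ := fun x => -ψ x)
    (g := fun x => -g x) (v := -V)
    (fun θ hθ => hasGradientAt_iff_hasFDerivAt.mpr (by
      rw [map_neg]
      exact (hasGradientAt_iff_hasFDerivAt.mp (hψ θ hθ)).neg))
    (fun θ hθ => (hg θ hθ).neg)
    (fun θ hθ w => by
      rw [fderiv_fun_neg, neg_apply, inner_neg_left]
      linarith [hV θ hθ w]) ha hb
  simp only [inner_neg_right] at hneg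
  linarith

end ConvexTaylor

section Hessian

variable {K : ℕ} {ψ : EuclideanSpace ℝ (Fin K) → ℝ} {U : Set (EuclideanSpace ℝ (Fin K))}
  {θ a b : EuclideanSpace ℝ (Fin K)}

lemma differentiableAt_gradient_of_mem_ThetaI (h : θ ∈ ThetaI ψ) :
    DifferentiableAt ℝ (gradient ψ) θ := by
  -- otherwise the Hessian is the junk value `0`, whose `lamMin` is `0`
  by_contra hnd
  have hpos := h.1
  rw [hess, fderiv_zero_of_not_differentiableAt hnd, lamMin_zero] at hpos
  exact lt_irrefl 0 hpos

lemma vRho_nonneg (hI : U ⊆ ThetaI ψ) : 0 ≤ vRho ψ U :=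
  Real.sInf_nonneg (by rintro r ⟨θ, hθ, rfl⟩; exact (hI hθ).1.le)

lemma vRho_mul_sq_norm_le (hI : U ⊆ ThetaI ψ) (hθ : θ ∈ U) (w : EuclideanSpace ℝ (Fin K)) :
    vRho ψ U * ‖w‖ ^ 2 ≤ ⟪hess ψ θ w, w⟫_ℝ := by
  have hbdd : BddBelow {r | ∃ θ ∈ U, r = lamMin (hess ψ θ)} :=
    ⟨0, by rintro r ⟨θ, hθ, rfl⟩; exact (hI hθ).1.le⟩
  exact (mul_le_mul_of_nonneg_right (csInf_le hbdd ⟨θ, hθ, rfl⟩) (sq_nonneg _)).trans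
    (lamMin_mul_sq_norm_le _ _)

lemma inner_le_VRho_mul_sq_norm (hbdd : BddAbove {r | ∃ θ ∈ U, r = lamMax (hess ψ θ)})
    (hθ : θ ∈ U) (w : EuclideanSpace ℝ (Fin K)) :
    ⟪hess ψ θ w, w⟫_ℝ ≤ VRho ψ U * ‖w‖ ^ 2 :=
  (inner_le_lamMax_mul_sq_norm _ _).trans
    (mul_le_mul_of_nonneg_right (le_csSup hbdd ⟨θ, hθ, rfl⟩) (sq_nonneg _))

lemma VRho_pos (hI : U ⊆ ThetaI ψ) (hbdd : BddAbove {r | ∃ θ ∈ U, r = lamMax (hess ψ θ)})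
    (hθ : θ ∈ U) : 0 < VRho ψ U :=
  (hI hθ).1.trans_le ((hI hθ).2.trans (le_csSup hbdd ⟨θ, hθ, rfl⟩))

variable (hU : Convex ℝ U) (hψ : ∀ θ ∈ U, DifferentiableAt ℝ ψ θ) (hI : U ⊆ ThetaI ψ)
include hU hI

lemma vRho_mul_norm_le_norm_gradient_sub (ha : a ∈ U) (hb : b ∈ U) :
    vRho ψ U * ‖a - b‖ ≤ ‖gradient ψ a - gradient ψ b‖ :=
  hU.mul_norm_le_norm_sub (fun _ hθ => differentiableAt_gradient_of_mem_ThetaI (hI hθ))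
    (fun _ hθ => vRho_mul_sq_norm_le hI hθ) ha hb

include hψ

lemma vRho_div_two_mul_sq_norm_le_breg (ha : a ∈ U) (hb : b ∈ U) :
    vRho ψ U / 2 * ‖b - a‖ ^ 2 ≤ breg ψ a b :=
  hU.div_two_mul_sq_norm_le_sub_sub_inner (fun θ hθ => (hψ θ hθ).hasGradientAt)
    (fun _ hθ => differentiableAt_gradient_of_mem_ThetaI (hI hθ))
    (fun _ hθ => vRho_mul_sq_norm_le hI hθ) hb ha

lemma breg_le_VRho_div_two_mul_sq_norm
    (hbdd : BddAbove {r | ∃ θ ∈ U, r = lamMax (hess ψ θ)}) (ha : a ∈ U) (hb : b ∈ U) :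
    breg ψ a b ≤ VRho ψ U / 2 * ‖b - a‖ ^ 2 :=
  hU.sub_sub_inner_le_div_two_mul_sq_norm (fun θ hθ => (hψ θ hθ).hasGradientAt)
    (fun _ hθ => differentiableAt_gradient_of_mem_ThetaI (hI hθ))
    (fun _ hθ => inner_le_VRho_mul_sq_norm hbdd hθ) hb ha

lemma sq_mul_sqrt_le_breg (ha : a ∈ U) (hb : b ∈ U) {c : ℝ} (hc0 : 0 ≤ c)
    (hc : c ≤ ‖b - a‖) : (c * √(vRho ψ U / 2)) ^ 2 ≤ breg ψ a b := by
  have hv := vRho_nonneg hI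
  rw [mul_pow, Real.sq_sqrt (by positivity), mul_comm]
  calc vRho ψ U / 2 * c ^ 2 ≤ vRho ψ U / 2 * ‖b - a‖ ^ 2 := by gcongr
    _ ≤ breg ψ a b := vRho_div_two_mul_sq_norm_le_breg hU hψ hI ha hb

/-- When the largest Hessian eigenvalues are unbounded on `U`, `VRho ψ U` is the junk value `0`
and the left side vanishes. -/
lemma sqrt_mul_sqrt_le_mul_norm_gradient_sub (ha : a ∈ U) (hb : b ∈ U) {n s : ℝ}
    (hn : 0 < n) (hs : s / n ≤ breg ψ b a) :
    √(2 * vRho ψ U ^ 2 / VRho ψ U) * √(n * s)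
      ≤ n * ‖gradient ψ a - gradient ψ b‖ := by
  by_cases hbdd : BddAbove {r | ∃ θ ∈ U, r = lamMax (hess ψ θ)}
  · have hV := VRho_pos hI hbdd ha
    have hv := vRho_nonneg hI
    have hsn : s ≤ n * (VRho ψ U / 2 * ‖a - b‖ ^ 2) :=
      (div_le_iff₀' hn).1
        (hs.trans (breg_le_VRho_div_two_mul_sq_norm hU hψ hI hbdd hb ha))
    rw [← Real.sqrt_mul (by positivity)]
    calc √(2 * vRho ψ U ^ 2 / VRho ψ U * (n * s))
        ≤ √((n * (vRho ψ U * ‖a - b‖)) ^ 2) := by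
          gcongr
          calc 2 * vRho ψ U ^ 2 / VRho ψ U * (n * s)
              ≤ 2 * vRho ψ U ^ 2 / VRho ψ U
                  * (n * (n * (VRho ψ U / 2 * ‖a - b‖ ^ 2))) := by
                gcongr
            _ = (n * (vRho ψ U * ‖a - b‖)) ^ 2 := by field_simp
      _ = n * (vRho ψ U * ‖a - b‖) := Real.sqrt_sq (by positivity)
      _ ≤ n * ‖gradient ψ a - gradient ψ b‖ := by
          gcongr
          exact vRho_mul_norm_le_norm_gradient_sub hU hI ha hb
  · rw [VRho, Real.sSup_of_not_bddAbove hbdd, div_zero, Real.sqrt_zero, zero_mul]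
    positivity

lemma log_likelihood_ratio_le {θstar θc θh : EuclideanSpace ℝ (Fin K)} (hstar : θstar ∈ U)
    (hc : θc ∈ U) (hh : θh ∈ U) {p c : ℝ} (hp : 0 ≤ p) (hc0 : 0 ≤ c)
    (hfar : c ≤ ‖θstar - θc‖)
    {ni n : ℕ} (hni : 1 ≤ ni) (hn : ni ≤ n) {s s' : ℝ} (hs : s / n ≤ breg ψ θh θc)
    (hs' : s' ≤ n * s) (hcone : gradient ψ θh ∈ coneC ψ θstar p θc) :
    n * ⟪θstar - θc, gradient ψ θh⟫_ℝ - n * (ψ θstar - ψ θc)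
      ≤ -(ni : ℝ) * (c * √(vRho ψ U / 2)) ^ 2
        - p * c * √(2 * vRho ψ U ^ 2 / VRho ψ U) * √s' := by
  have hn0 : (0 : ℝ) < n := Nat.cast_pos.mpr (by omega)
  have hcone_term : p * c * √(2 * vRho ψ U ^ 2 / VRho ψ U) * √s'
      ≤ n * ⟪θstar - θc, gradient ψ θc - gradient ψ θh⟫_ℝ :=
    calc p * c * √(2 * vRho ψ U ^ 2 / VRho ψ U) * √s'
        ≤ p * c * (√(2 * vRho ψ U ^ 2 / VRho ψ U) * √(n * s)) := by
          rw [← mul_assoc]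
          gcongr
      _ ≤ p * c * (n * ‖gradient ψ θc - gradient ψ θh‖) :=
          mul_le_mul_of_nonneg_left (sqrt_mul_sqrt_le_mul_norm_gradient_sub hU hψ hI hc hh hn0 hs)
            (by positivity)
      _ = n * (p * c * ‖gradient ψ θc - gradient ψ θh‖) := by ring
      _ ≤ n * ⟪θstar - θc, gradient ψ θc - gradient ψ θh⟫_ℝ := by
          gcongr
          exact (by gcongr : p * c * _ ≤ p * ‖θstar - θc‖ * _).trans hcone
  have hbreg_term : (ni : ℝ) * (c * √(vRho ψ U / 2)) ^ 2 ≤ n * breg ψ θc θstar :=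
    mul_le_mul (by exact_mod_cast hn) (sq_mul_sqrt_le_breg hU hψ hI hc hstar hc0 hfar)
      (sq_nonneg _) hn0.le
  have hsplit : n * ⟪θstar - θc, gradient ψ θh⟫_ℝ - n * (ψ θstar - ψ θc)
      = -(n * ⟪θstar - θc, gradient ψ θc - gradient ψ θh⟫_ℝ)
        - n * breg ψ θc θstar := by
    rw [breg, inner_sub_right]
    ring
  linarith

end Hessian

section LogPartition

variable {K : ℕ} {ν₀ : Measure ℝ} {F : ℝ → EuclideanSpace ℝ (Fin K)}
  {θ₀ : EuclideanSpace ℝ (Fin K)}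

lemma measurable_exp_inner (hF : Measurable F) (θ : EuclideanSpace ℝ (Fin K)) :
    Measurable fun x => exp ⟪θ, F x⟫_ℝ :=
  measurable_exp.comp (measurable_const.inner hF)

lemma integrable_exp_inner (hF : Measurable F) {θ : EuclideanSpace ℝ (Fin K)}
    (hθ : θ ∈ ThetaD ν₀ F) : Integrable (fun x => exp ⟪θ, F x⟫_ℝ) ν₀ := by
  refine ⟨(measurable_exp_inner hF θ).aestronglyMeasurable, ?_⟩
  rw [hasFiniteIntegral_iff_ofReal (.of_forall fun _ => (exp_pos _).le)]
  exact hθ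

lemma integral_exp_inner_eq_toReal (hF : Measurable F) (θ : EuclideanSpace ℝ (Fin K)) :
    ∫ x, exp ⟪θ, F x⟫_ℝ ∂ν₀
      = (∫⁻ x, ENNReal.ofReal (exp ⟪θ, F x⟫_ℝ) ∂ν₀).toReal :=
  integral_eq_lintegral_of_nonneg_ae (.of_forall fun _ => (exp_pos _).le)
    (measurable_exp_inner hF θ).aestronglyMeasurable

lemma integral_exp_inner_pos (hF : Measurable F) (hν₀ : ν₀ ≠ 0)
    {θ : EuclideanSpace ℝ (Fin K)} (hθ : θ ∈ ThetaD ν₀ F) : 0 < ∫ x, exp ⟪θ, F x⟫_ℝ ∂ν₀ := by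
  rw [integral_exp_inner_eq_toReal hF]
  refine ENNReal.toReal_pos (ne_of_gt ?_) hθ.ne
  rw [lintegral_pos_iff_support (measurable_exp_inner hF θ).ennreal_ofReal]
  simpa [Function.support, exp_pos] using Measure.measure_univ_pos.mpr hν₀

lemma exists_norm_le_sqrt_mul_abs (hK : 1 ≤ K) (y : EuclideanSpace ℝ (Fin K)) :
    ∃ k, ‖y‖ ≤ √K * |y k| := by
  have : Nonempty (Fin K) := ⟨⟨0, hK⟩⟩
  obtain ⟨k, -, hk⟩ := Finset.exists_max_image Finset.univ (fun k => |y k|) Finset.univ_nonempty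
  refine ⟨k, ?_⟩
  rw [EuclideanSpace.norm_eq, ← Real.sqrt_sq (abs_nonneg (y k)),
    ← Real.sqrt_mul (Nat.cast_nonneg K)]
  gcongr
  calc ∑ i, ‖y i‖ ^ 2 ≤ ∑ _i : Fin K, |y k| ^ 2 := by
        gcongr with i
        rw [Real.norm_eq_abs]
        exact hk i (Finset.mem_univ i)
    _ = K * |y k| ^ 2 := by simp

lemma exp_add_mul_abs_le (u a s : ℝ) :
    exp (u + a * |s|) ≤ exp (u + a * s) + exp (u - a * s) := by
  rcases le_total 0 s with hs | hs
  · rw [abs_of_nonneg hs]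
    linarith [exp_pos (u - a * s)]
  · rw [abs_of_nonpos hs, mul_neg, ← sub_eq_add_neg]
    linarith [exp_pos (u + a * s)]

/-- Exponential moments in every coordinate direction around `θ₀` dominate a small exponential
moment of `‖F‖`. -/
lemma exists_integrable_exp_inner_add_mul_norm (hK : 1 ≤ K) (hF : Measurable F)
    (hθ₀ : θ₀ ∈ interior (ThetaD ν₀ F)) :
    ∃ δ > 0, Integrable (fun x => exp (⟪θ₀, F x⟫_ℝ + δ * ‖F x‖)) ν₀ := by
  obtain ⟨ε, hε, hball⟩ := Metric.isOpen_iff.mp isOpen_interior θ₀ hθ₀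
  set a := ε / 2
  set e : Fin K → EuclideanSpace ℝ (Fin K) := fun k => EuclideanSpace.single k 1
  have hK0 : (0 : ℝ) < √K := Real.sqrt_pos.mpr (by exact_mod_cast hK)
  have hmem : ∀ k (s : ℝ), |s| = a → θ₀ + s • e k ∈ ThetaD ν₀ F := fun k s hs =>
    interior_subset <| hball <| by
      rw [mem_ball_iff_norm, add_sub_cancel_left, norm_smul, PiLp.norm_single, norm_one,
        mul_one, Real.norm_eq_abs, hs]
      exact half_lt_self hε
  have hinner : ∀ k (s : ℝ) (y : EuclideanSpace ℝ (Fin K)),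
      ⟪θ₀ + s • e k, y⟫_ℝ = ⟪θ₀, y⟫_ℝ + s * y k := fun k s y => by
    simp [e, inner_add_left, real_inner_smul_left, EuclideanSpace.inner_single_left]
  refine ⟨a / √K, by positivity, ?_⟩
  have hB : Integrable
      (fun x => ∑ k, (exp ⟪θ₀ + a • e k, F x⟫_ℝ + exp ⟪θ₀ + (-a) • e k, F x⟫_ℝ)) ν₀ :=
    integrable_finsetSum _ fun k _ =>
      (integrable_exp_inner hF (hmem k a (abs_of_pos (by positivity)))).add
        (integrable_exp_inner hF (hmem k (-a) (by rw [abs_neg, abs_of_pos (by positivity)])))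
  refine hB.mono' (measurable_exp.comp ((measurable_const.inner hF).add
    (measurable_const.mul hF.norm))).aestronglyMeasurable ?_
  refine .of_forall fun x => ?_
  obtain ⟨k, hk⟩ := exists_norm_le_sqrt_mul_abs hK (F x)
  rw [Real.norm_of_nonneg (exp_pos _).le]
  calc exp (⟪θ₀, F x⟫_ℝ + a / √K * ‖F x‖)
      ≤ exp (⟪θ₀, F x⟫_ℝ + a * |F x k|) := by
        gcongr exp (_ + ?_)
        calc a / √K * ‖F x‖ ≤ a / √K * (√K * |F x k|) := by gcongr
          _ = a * |F x k| := by field_simp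
    _ ≤ exp ⟪θ₀ + a • e k, F x⟫_ℝ + exp ⟪θ₀ + (-a) • e k, F x⟫_ℝ := by
        rw [hinner, hinner, neg_mul, ← sub_eq_add_neg]
        exact exp_add_mul_abs_le _ _ _
    _ ≤ _ := Finset.single_le_sum (f := fun k =>
          exp ⟪θ₀ + a • e k, F x⟫_ℝ + exp ⟪θ₀ + (-a) • e k, F x⟫_ℝ)
          (fun k _ => by positivity) (Finset.mem_univ k)

lemma hasFDerivAt_exp_inner (θ y : EuclideanSpace ℝ (Fin K)) :
    HasFDerivAt (fun θ => exp ⟪θ, y⟫_ℝ) (exp ⟪θ, y⟫_ℝ • innerSL ℝ y) θ := by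
  have hlin : HasFDerivAt (fun θ => ⟪θ, y⟫_ℝ) (innerSL ℝ y) θ := by
    rw [show (fun θ => ⟪θ, y⟫_ℝ) = innerSL ℝ y from funext fun θ => real_inner_comm y θ]
    exact (innerSL ℝ y).hasFDerivAt
  exact hlin.exp

lemma self_le_two_div_mul_exp {δ : ℝ} (hδ : 0 < δ) (r : ℝ) :
    r ≤ 2 / δ * exp (δ / 2 * r) := by
  have := add_one_le_exp (δ / 2 * r)
  calc r = 2 / δ * (δ / 2 * r) := by field_simp
    _ ≤ 2 / δ * exp (δ / 2 * r) := by gcongr; linarith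

lemma psiFun_differentiableAt (hK : 1 ≤ K) (hF : Measurable F) (hν₀ : ν₀ ≠ 0)
    (hθ₀ : θ₀ ∈ interior (ThetaD ν₀ F)) :
    DifferentiableAt ℝ (psiFun ν₀ F) θ₀ := by
  obtain ⟨δ, hδ, hint⟩ := exists_integrable_exp_inner_add_mul_norm hK hF hθ₀
  have hbound : ∀ x, ∀ θ ∈ ball θ₀ (δ / 2),
      ‖exp ⟪θ, F x⟫_ℝ • innerSL ℝ (F x)‖
        ≤ 2 / δ * exp (⟪θ₀, F x⟫_ℝ + δ * ‖F x‖) := by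
    intro x θ hθ
    have hclose : ⟪θ, F x⟫_ℝ ≤ ⟪θ₀, F x⟫_ℝ + δ / 2 * ‖F x‖ := by
      have := real_inner_le_norm (θ - θ₀) (F x)
      rw [inner_sub_left] at this
      nlinarith [mem_ball_iff_norm.mp hθ, norm_nonneg (F x)]
    calc ‖exp ⟪θ, F x⟫_ℝ • innerSL ℝ (F x)‖ = exp ⟪θ, F x⟫_ℝ * ‖F x‖ := by
          rw [norm_smul, innerSL_apply_norm, Real.norm_of_nonneg (exp_pos _).le]
      _ ≤ exp (⟪θ₀, F x⟫_ℝ + δ / 2 * ‖F x‖)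
          * (2 / δ * exp (δ / 2 * ‖F x‖)) := by
          gcongr
          exact self_le_two_div_mul_exp hδ _
      _ = 2 / δ * exp (⟪θ₀, F x⟫_ℝ + δ * ‖F x‖) := by
          rw [mul_left_comm, ← exp_add]
          ring_nf
  have hZ := hasFDerivAt_integral_of_dominated_of_fderiv_le (ball_mem_nhds θ₀ (half_pos hδ))
    (.of_forall fun θ => (measurable_exp_inner hF θ).aestronglyMeasurable)
    (integrable_exp_inner hF (interior_subset hθ₀))
    ((measurable_exp_inner hF θ₀).smul ((innerSL ℝ).continuous.measurable.comp hF)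
      |>.aestronglyMeasurable)
    (.of_forall hbound) (hint.const_mul _)
    (.of_forall fun x θ _ => hasFDerivAt_exp_inner θ (F x))
  rw [show psiFun ν₀ F = fun θ => log (∫ x, exp ⟪θ, F x⟫_ℝ ∂ν₀) from
    funext fun θ => by rw [psiFun, integral_exp_inner_eq_toReal hF]]
  exact hZ.differentiableAt.log (integral_exp_inner_pos hF hν₀ (interior_subset hθ₀)).ne'

lemma nuP_eq_withDensity (hF : Measurable F) (θ θ' : EuclideanSpace ℝ (Fin K)) :
    nuP ν₀ F θ = (nuP ν₀ F θ').withDensity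
      fun x => ENNReal.ofReal
        (exp (⟪θ - θ', F x⟫_ℝ - (psiFun ν₀ F θ - psiFun ν₀ F θ'))) := by
  have hmeas : ∀ (η : EuclideanSpace ℝ (Fin K)) (c : ℝ),
      Measurable fun x => ENNReal.ofReal (exp (⟪η, F x⟫_ℝ - c)) := fun η c =>
    (measurable_exp.comp ((measurable_const.inner hF).sub measurable_const)).ennreal_ofReal
  rw [nuP, nuP, ← withDensity_mul _ (hmeas _ _) (hmeas _ _)]
  congr 1
  funext x
  rw [Pi.mul_apply, ← ENNReal.ofReal_mul (exp_pos _).le, ← exp_add, inner_sub_left]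
  ring_nf

lemma ne_zero_of_isProbabilityMeasure_nuP {θ : EuclideanSpace ℝ (Fin K)}
    [IsProbabilityMeasure (nuP ν₀ F θ)] : ν₀ ≠ 0 := by
  rintro rfl
  exact IsProbabilityMeasure.ne_zero (nuP 0 F θ) (by simp [nuP])

end LogPartition

section ChangeOfMeasure

variable {Ω α : Type*} {m : MeasurableSpace Ω} [MeasurableSpace α]

lemma measure_iUnion_le_of_adapted {P Q : Measure Ω} (ℱ : Filtration ℕ m) {E : ℕ → Set Ω}
    (hE : ∀ n, MeasurableSet[ℱ n] (E n)) {c : ℝ≥0∞}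
    (h : ∀ n G, MeasurableSet[ℱ n] G → G ⊆ E n → P G ≤ c * Q G) :
    P (⋃ n, E n) ≤ c * Q (⋃ n, E n) := by
  have hD : ∀ n, MeasurableSet[ℱ n] (disjointed E n) := fun n => by
    rw [disjointed_eq_inter_compl]
    exact (hE n).inter <| .iInter fun j => .iInter fun hj => (ℱ.mono hj.le _ (hE j)).compl
  have hmeas : ∀ n, MeasurableSet (disjointed E n) := fun n => ℱ.le n _ (hD n)
  rw [← iUnion_disjointed, measure_iUnion (disjoint_disjointed E) hmeas,
    measure_iUnion (disjoint_disjointed E) hmeas, ← ENNReal.tsum_mul_left]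
  exact ENNReal.tsum_le_tsum fun n => h n _ (hD n) (disjointed_subset E n)

/-- Its `n`-th σ-algebra is generated by `X 0, …, X (n - 1)`: one index less than in
`Filtration.natural`. -/
def initialSegmentFiltration (X : ℕ → Ω → α) (hX : ∀ i, Measurable (X i)) :
    Filtration ℕ m where
  seq n := MeasurableSpace.comap (fun ω (i : Fin n) => X i ω) inferInstance
  mono' k n hkn := by
    show MeasurableSpace.comap _ _ ≤ MeasurableSpace.comap _ _
    rw [show (fun ω (i : Fin k) => X i ω)
        = (fun w (i : Fin k) => w (Fin.castLE hkn i)) ∘ fun ω (i : Fin n) => X i ω from rfl,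
      ← MeasurableSpace.comap_comp]
    exact MeasurableSpace.comap_mono
      (measurable_pi_lambda _ fun i => measurable_pi_apply _).comap_le
  le' n := (measurable_pi_lambda (fun ω (i : Fin n) => X i ω) fun i => hX i).comap_le

lemma map_initialSegment_eq_pi {P : Measure Ω} [IsProbabilityMeasure P] {X : ℕ → Ω → α}
    (hX : ∀ i, Measurable (X i)) (hind : iIndepFun X P) {μ : Measure α}
    (hμ : ∀ i, P.map (X i) = μ) (n : ℕ) :
    P.map (fun ω (i : Fin n) => X i ω) = Measure.pi fun _ => μ := by
  rw [iIndepFun.map_fun_eq_pi_map (f := fun i : Fin n => X i) (fun i => (hX i).aemeasurable)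
    (hind.precomp Fin.val_injective)]
  exact congrArg Measure.pi (funext fun i => hμ i)

lemma MeasureTheory.Measure.pi_withDensity {ι : Type*} [Fintype ι] {β : ι → Type*}
    [∀ i, MeasurableSpace (β i)] (μ : ∀ i, Measure (β i))
    [∀ i, IsProbabilityMeasure (μ i)]
    {r : ∀ i, β i → ℝ≥0∞} (hr : ∀ i, Measurable (r i))
    [∀ i, SigmaFinite ((μ i).withDensity (r i))] :
    Measure.pi (fun i => (μ i).withDensity (r i))
      = (Measure.pi μ).withDensity fun w => ∏ i, r i (w i) := by
  classical
  refine Measure.pi_eq (μ := fun i => (μ i).withDensity (r i)) fun s hs => ?_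
  have hind : (univ.pi s).indicator (fun w => ∏ i, r i (w i))
      = fun w => ∏ i, (s i).indicator (r i) (w i) := by
    funext w
    by_cases hw : w ∈ univ.pi s
    · rw [indicator_of_mem hw]
      exact Finset.prod_congr rfl fun i _ => (indicator_of_mem (hw i (mem_univ i)) _).symm
    · obtain ⟨i, -, hi⟩ := not_forall₂.mp hw
      rw [indicator_of_notMem hw,
        Finset.prod_eq_zero (Finset.mem_univ i) (indicator_of_notMem hi _)]
  rw [withDensity_apply _ (.univ_pi hs), ← lintegral_indicator (.univ_pi hs), hind,
    lintegral_prod_eq_prod_lintegral_of_indepFun _ _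
      (iIndepFun_pi fun i => ((hr i).indicator (hs i)).aemeasurable)
      fun i => ((hr i).indicator (hs i)).comp (measurable_pi_apply i)]
  refine Finset.prod_congr rfl fun i _ => ?_
  rw [(measurePreserving_eval μ i).lintegral_comp ((hr i).indicator (hs i)),
    lintegral_indicator (hs i), withDensity_apply _ (hs i)]

theorem measure_biUnion_preimage_le_of_iid {P Q : Measure Ω} [IsProbabilityMeasure P]
    [IsProbabilityMeasure Q] {X : ℕ → Ω → α} (hX : ∀ i, Measurable (X i))
    (hPX : iIndepFun X P) (hQX : iIndepFun X Q) {μ : Measure α} {r : α → ℝ≥0∞}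
    (hr : Measurable r) (hP : ∀ i, P.map (X i) = μ.withDensity r) (hQ : ∀ i, Q.map (X i) = μ)
    {s : Set ℕ} {B : ∀ n, Set (Fin n → α)} (hB : ∀ n, MeasurableSet (B n)) {c : ℝ≥0∞}
    (hc : ∀ n ∈ s, ∀ w ∈ B n, ∏ i, r (w i) ≤ c) :
    P (⋃ n ∈ s, (fun ω (i : Fin n) => X i ω) ⁻¹' B n)
      ≤ c * Q (⋃ n ∈ s, (fun ω (i : Fin n) => X i ω) ⁻¹' B n) := by
  have : IsProbabilityMeasure μ := hQ 0 ▸ Measure.isProbabilityMeasure_map (hX 0).aemeasurable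
  have : IsProbabilityMeasure (μ.withDensity r) :=
    hP 0 ▸ Measure.isProbabilityMeasure_map (hX 0).aemeasurable
  refine measure_iUnion_le_of_adapted (initialSegmentFiltration X hX)
    (fun n => .iUnion fun _ => ⟨B n, hB n, rfl⟩) ?_
  rintro n G ⟨D, hD, rfl⟩ hGE
  set S := fun ω (i : Fin n) => X i ω
  have hS : Measurable S := measurable_pi_lambda _ fun i => hX i
  by_cases hn : n ∈ s
  · have hDB : S ⁻¹' D = S ⁻¹' (D ∩ B n) := by
      rw [preimage_inter, inter_eq_left.2 (by simpa [hn] using hGE)]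
    rw [hDB, ← Measure.map_apply hS (hD.inter (hB n)), ← Measure.map_apply hS (hD.inter (hB n)),
      map_initialSegment_eq_pi hX hPX hP, map_initialSegment_eq_pi hX hQX hQ,
      Measure.pi_withDensity _ fun _ => hr, withDensity_apply _ (hD.inter (hB n))]
    calc ∫⁻ w in D ∩ B n, ∏ i, r (w i) ∂(Measure.pi fun _ => μ)
        ≤ ∫⁻ _ in D ∩ B n, c ∂(Measure.pi fun _ => μ) :=
          setLIntegral_mono measurable_const fun w hw => hc n hn w hw.2
      _ = c * (Measure.pi fun _ => μ) (D ∩ B n) := setLIntegral_const _ _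
  · simp [show S ⁻¹' D = ∅ by simpa [hn] using hGE]

end ChangeOfMeasure

section SigmaCompact

variable {X Y : Type*} [TopologicalSpace X] [TopologicalSpace Y]

lemma IsSigmaCompact.measurableSet [T2Space Y] [MeasurableSpace Y] [OpensMeasurableSpace Y]
    {s : Set Y} (hs : IsSigmaCompact s) : MeasurableSet s := by
  obtain ⟨K, hK, rfl⟩ := hs
  exact .iUnion fun n => (hK n).isClosed.measurableSet

lemma IsOpen.isSigmaCompact_image_setOf_le [LocallyCompactSpace X] [SecondCountableTopology X]
    {U : Set X} (hU : IsOpen U) {g : X → Y} (hg : ContinuousOn g U) {b : X → ℝ}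
    (hb : ContinuousOn b U) (c : ℝ) :
    IsSigmaCompact {y | ∃ θ ∈ U, g θ = y ∧ b θ ≥ c} := by
  have := hU.locallyCompactSpace
  have hS : IsSigmaCompact {x : U | c ≤ b x} :=
    isSigmaCompact_univ.of_isClosed_subset (isClosed_le continuous_const hb.domRestrict)
      (subset_univ _)
  convert hS.image hg.domRestrict using 1
  ext y
  simp only [mem_ofPred_eq, mem_image, Subtype.exists, domRestrict_apply]
  grind

end SigmaCompact

section Events

variable {K : ℕ} {ψ : EuclideanSpace ℝ (Fin K) → ℝ} {U : Set (EuclideanSpace ℝ (Fin K))}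

lemma isClosed_coneC (θstar : EuclideanSpace ℝ (Fin K)) (p : ℝ)
    (θ : EuclideanSpace ℝ (Fin K)) : IsClosed (coneC ψ θstar p θ) :=
  isClosed_le (by fun_prop) (by fun_prop)

lemma measurableSet_gradient_image (hU : IsOpen U) (hψ : ∀ θ ∈ U, DifferentiableAt ℝ ψ θ)
    (hI : U ⊆ ThetaI ψ) (θc : EuclideanSpace ℝ (Fin K)) (a : ℝ) :
    MeasurableSet {y | ∃ θh ∈ U, gradient ψ θh = y ∧ breg ψ θh θc ≥ a} := by
  have hg : ContinuousOn (gradient ψ) U := fun θ hθ =>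
    (differentiableAt_gradient_of_mem_ThetaI (hI hθ)).continuousAt.continuousWithinAt
  have hψc : ContinuousOn ψ U := fun θ hθ => (hψ θ hθ).continuousAt.continuousWithinAt
  refine (hU.isSigmaCompact_image_setOf_le hg ?_ a).measurableSet
  exact (continuousOn_const.sub hψc).sub ((continuousOn_const.sub continuousOn_id).inner hg)

lemma Ecp_eq_preimage {Ω : Type*} (ν₀ : Measure ℝ) (F : ℝ → EuclideanSpace ℝ (Fin K))
    (Θρ : Set (EuclideanSpace ℝ (Fin K))) (θstar θc : EuclideanSpace ℝ (Fin K)) (p : ℝ)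
    (f : ℝ → ℝ) (X : ℕ → Ω → ℝ) (t n : ℕ) :
    Ecp ν₀ F Θρ θstar θc p f X t n = (fun ω (i : Fin n) => X i ω) ⁻¹'
      {w | (n : ℝ)⁻¹ • ∑ i, F (w i) ∈
        {y | ∃ θh ∈ Θρ, gradient (psiFun ν₀ F) θh = y ∧
          breg (psiFun ν₀ F) θh θc ≥ f ((t : ℝ) / (n : ℝ)) / (n : ℝ)} ∩
        coneC (psiFun ν₀ F) θstar p θc} := by
  ext ω
  simp only [Ecp, hatF, mem_ofPred_eq, mem_preimage, mem_inter_iff,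
    Fin.sum_univ_eq_sum_range (fun i => F (X i ω)) n]

lemma prod_ofReal_exp_inner_sub {n : ℕ} (F : ℝ → EuclideanSpace ℝ (Fin K))
    (Δ : EuclideanSpace ℝ (Fin K)) (c : ℝ) (w : Fin n → ℝ) :
    ∏ i, ENNReal.ofReal (exp (⟪Δ, F (w i)⟫_ℝ - c))
      = ENNReal.ofReal (exp (n * ⟪Δ, (n : ℝ)⁻¹ • ∑ i, F (w i)⟫_ℝ - n * c)) := by
  rw [← ENNReal.ofReal_prod_of_nonneg fun i _ => (exp_pos _).le, ← exp_sum,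
    real_inner_smul_right, inner_sum, Finset.sum_sub_distrib, Finset.sum_const,
    Finset.card_univ, Fintype.card_fin, nsmul_eq_mul]
  rcases eq_or_ne n 0 with rfl | hn
  · simp
  · field_simp

end Events

theorem change_of_measure_general {K : ℕ} (hK : 1 ≤ K) (ν₀ : Measure ℝ)
    (F : ℝ → EuclideanSpace ℝ (Fin K)) (hF : Measurable F)
    (Θ : Set (EuclideanSpace ℝ (Fin K))) (hΘconv : Convex ℝ Θ) (ρ : ℝ) (hρ : 0 < ρ)
    (θstar : EuclideanSpace ℝ (Fin K)) (hθΘ : θstar ∈ Θ)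
    (hsub : thickening ρ Θ ⊆ interior (ThetaI (psiFun ν₀ F)) ∩ interior (ThetaD ν₀ F))
    (ε : ℝ) (hρε : 0 < rhoEps ν₀ F θstar ε)
    (p : ℝ) (hp : p ∈ Set.Icc (0:ℝ) 1) (η : ℝ) (hη : η ∈ Set.Ioc (0:ℝ) 1)
    (θc : EuclideanSpace ℝ (Fin K)) (hθc : θc ∈ thickening ρ Θ ∩ ThetaD ν₀ F)
    (hθcfar : ‖θstar - θc‖ ≥ η * rhoEps ν₀ F θstar ε)
    (t : ℕ) (f : ℝ → ℝ)
    (hfmono : ∀ n n' : ℕ, 1 ≤ n → n ≤ n' →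
      (n : ℝ) * f ((t : ℝ) / (n : ℝ)) ≤ (n' : ℝ) * f ((t : ℝ) / (n' : ℝ)))
    {Ω : Type*} [MeasurableSpace Ω] (P Pc : Measure Ω)
    [IsProbabilityMeasure P] [IsProbabilityMeasure Pc]
    (X : ℕ → Ω → ℝ) (hX : IsIID P X (nuP ν₀ F θstar)) (hXc : IsIID Pc X (nuP ν₀ F θc))
    (ni ni1 : ℕ) (hni : 1 ≤ ni) :
    P (⋃ n ∈ Set.Ico ni ni1, Ecp ν₀ F (thickening ρ Θ) θstar θc p f X t n)
      ≤ ENNReal.ofReal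
          (Real.exp (-(ni : ℝ) * (η * rhoEps ν₀ F θstar ε *
              Real.sqrt (vRho (psiFun ν₀ F) (thickening ρ Θ) / 2)) ^ 2
            - p * η * rhoEps ν₀ F θstar ε *
              Real.sqrt (2 * vRho (psiFun ν₀ F) (thickening ρ Θ) ^ 2 /
                VRho (psiFun ν₀ F) (thickening ρ Θ)) *
              Real.sqrt ((ni : ℝ) * f ((t : ℝ) / (ni : ℝ)))))
        * Pc (⋃ n ∈ Set.Ico ni ni1, Ecp ν₀ F (thickening ρ Θ) θstar θc p f X t n) := by
  set ψ := psiFun ν₀ F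
  set U := thickening ρ Θ
  have hU : Convex ℝ U := hΘconv.thickening ρ
  have hstar : θstar ∈ U := self_subset_thickening hρ Θ hθΘ
  have hI : U ⊆ ThetaI ψ := fun θ hθ => interior_subset (hsub hθ).1
  have : IsProbabilityMeasure (nuP ν₀ F θstar) :=
    hX.2.2 0 ▸ Measure.isProbabilityMeasure_map (hX.1 0).aemeasurable
  have hν₀ : ν₀ ≠ 0 := ne_zero_of_isProbabilityMeasure_nuP (F := F) (θ := θstar)
  have hψ : ∀ θ ∈ U, DifferentiableAt ℝ ψ θ := fun θ hθ =>
    psiFun_differentiableAt hK hF hν₀ (hsub hθ).2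
  simp only [Ecp_eq_preimage]
  refine measure_biUnion_preimage_le_of_iid hX.1 hX.2.1 hXc.2.1 (by fun_prop)
    (fun i => (hX.2.2 i).trans (nuP_eq_withDensity hF θstar θc)) hXc.2.2
    (fun n => (measurableSet_gradient_image isOpen_thickening hψ hI θc _).inter
      (isClosed_coneC θstar p θc).measurableSet |>.preimage (by fun_prop)) ?_
  rintro n ⟨hn, -⟩ w ⟨⟨θh, hθh, hgrad, hbreg⟩, hcone⟩
  rw [prod_ofReal_exp_inner_sub]
  refine ENNReal.ofReal_le_ofReal (exp_le_exp.mpr ?_)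
  have hbound := log_likelihood_ratio_le hU hψ hI hstar hθc.1 hθh hp.1
    (mul_nonneg hη.1.le hρε.le) hθcfar hni hn hbreg (hfmono ni n hni hn) (hgrad ▸ hcone)
  rw [hgrad, ← mul_assoc p] at hbound
  exact hbound

/-- Change of measure: moving from `θ*` to a cone base point `θ*_c` costs an
explicit exponential factor. -/
theorem change_of_measure {K : ℕ} (hK : 1 ≤ K) (ν₀ : Measure ℝ) [SigmaFinite ν₀]
    (F : ℝ → EuclideanSpace ℝ (Fin K)) (hF : Measurable F)
    (Θ : Set (EuclideanSpace ℝ (Fin K))) (hΘconv : Convex ℝ Θ) (ρ : ℝ) (hρ : 0 < ρ)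
    (θstar : EuclideanSpace ℝ (Fin K)) (hθΘ : θstar ∈ Θ)
    (hsub : thickening ρ Θ ⊆ interior (ThetaI (psiFun ν₀ F)) ∩ interior (ThetaD ν₀ F))
    (ε : ℝ) (hε : 0 < ε) (hρε : 0 < rhoEps ν₀ F θstar ε)
    (p : ℝ) (hp : p ∈ Set.Icc (0:ℝ) 1) (η : ℝ) (hη : η ∈ Set.Ioc (0:ℝ) 1)
    (θc : EuclideanSpace ℝ (Fin K)) (hθc : θc ∈ thickening ρ Θ ∩ ThetaD ν₀ F)
    (hθcfar : ‖θstar - θc‖ ≥ η * rhoEps ν₀ F θstar ε)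
    (t : ℕ) (f : ℝ → ℝ) (hf0 : ∀ x, 0 ≤ f x)
    (hfmono : ∀ n n' : ℕ, 1 ≤ n → n ≤ n' →
      (n : ℝ) * f ((t : ℝ) / (n : ℝ)) ≤ (n' : ℝ) * f ((t : ℝ) / (n' : ℝ)))
    {Ω : Type*} [MeasurableSpace Ω] (P Pc : Measure Ω)
    [IsProbabilityMeasure P] [IsProbabilityMeasure Pc]
    (X : ℕ → Ω → ℝ) (hX : IsIID P X (nuP ν₀ F θstar)) (hXc : IsIID Pc X (nuP ν₀ F θc))
    (ni ni1 : ℕ) (hni : 1 ≤ ni) (hlt : ni < ni1) :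
    P (⋃ n ∈ Set.Ico ni ni1, Ecp ν₀ F (thickening ρ Θ) θstar θc p f X t n)
      ≤ ENNReal.ofReal
          (Real.exp (-(ni : ℝ) * (η * rhoEps ν₀ F θstar ε *
              Real.sqrt (vRho (psiFun ν₀ F) (thickening ρ Θ) / 2)) ^ 2
            - p * η * rhoEps ν₀ F θstar ε *
              Real.sqrt (2 * vRho (psiFun ν₀ F) (thickening ρ Θ) ^ 2 /
                VRho (psiFun ν₀ F) (thickening ρ Θ)) *
              Real.sqrt ((ni : ℝ) * f ((t : ℝ) / (ni : ℝ)))))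
        * Pc (⋃ n ∈ Set.Ico ni ni1, Ecp ν₀ F (thickening ρ Θ) θstar θc p f X t n) :=
  change_of_measure_general hK ν₀ F hF Θ hΘconv ρ hρ θstar hθΘ hsub ε hρε p hp η hη θc hθc hθcfar t
    f hfmono P Pc X hX hXc ni ni1 hni
end
end

section
/- For every integer K ≥ 1 and every ε > 0, ∫_0^ε e^{−r²/2} r^{K−1} dr ≥ (1/(2K)) · min{ε, √(1 + 2/K)}^K. -/
/-!
Bound the Gaussian factor below by `e^{-r²/2} ≥ 1 - r²/2` and shrink the range of integration
to `[0, m]` with `m = min ε √(1 + 2/K)`. The polynomial integral is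
`m^K / K - m^(K+2) / (2(K+2))`, and `m² ≤ (K+2)/K` makes the subtracted term at most
`m^K / (2K)`.
-/

open Real

lemma one_sub_sq_div_two_le_exp_neg_sq_div_two (r : ℝ) : 1 - r ^ 2 / 2 ≤ exp (-r ^ 2 / 2) := by
  linarith [add_one_le_exp (-r ^ 2 / 2)]

lemma integral_one_sub_sq_div_two_mul_pow (k : ℕ) (m : ℝ) :
    ∫ r in (0 : ℝ)..m, (1 - r ^ 2 / 2) * r ^ k =
      m ^ (k + 1) / (k + 1) - m ^ (k + 3) / (2 * (k + 3)) := by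
  have hexpand : (fun r : ℝ => (1 - r ^ 2 / 2) * r ^ k) = fun r => r ^ k - r ^ (k + 2) / 2 := by
    ext r; ring
  rw [hexpand, intervalIntegral.integral_sub
      ((by fun_prop : Continuous _).intervalIntegrable _ _)
      ((by fun_prop : Continuous _).intervalIntegrable _ _),
    intervalIntegral.integral_div, integral_pow, integral_pow]
  push_cast
  field_simp
  ring

lemma integral_one_sub_sq_div_two_mul_pow_le_integral_exp (k : ℕ) {m ε : ℝ} (hm : 0 ≤ m)
    (hmε : m ≤ ε) :
    ∫ r in (0 : ℝ)..m, (1 - r ^ 2 / 2) * r ^ k ≤ ∫ r in (0 : ℝ)..ε, exp (-r ^ 2 / 2) * r ^ k := by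
  calc ∫ r in (0 : ℝ)..m, (1 - r ^ 2 / 2) * r ^ k
      ≤ ∫ r in (0 : ℝ)..m, exp (-r ^ 2 / 2) * r ^ k := by
        refine intervalIntegral.integral_mono_on hm
          ((by fun_prop : Continuous _).intervalIntegrable _ _)
          ((by fun_prop : Continuous _).intervalIntegrable _ _) fun r hr => ?_
        exact mul_le_mul_of_nonneg_right (one_sub_sq_div_two_le_exp_neg_sq_div_two r)
          (pow_nonneg hr.1 k)
    _ ≤ ∫ r in (0 : ℝ)..ε, exp (-r ^ 2 / 2) * r ^ k := by
        refine intervalIntegral.integral_mono_interval le_rfl hm hmε ?_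
          ((by fun_prop : Continuous _).intervalIntegrable _ _)
        filter_upwards [MeasureTheory.ae_restrict_mem measurableSet_Ioc] with r hr
        have hr0 : 0 ≤ r := hr.1.le
        positivity

lemma pow_div_two_mul_le_pow_div_sub_pow_div (k : ℕ) {m : ℝ} (hm : 0 ≤ m)
    (hm2 : m ^ 2 ≤ 1 + 2 / (k + 1)) :
    m ^ (k + 1) / (2 * (k + 1)) ≤ m ^ (k + 1) / (k + 1) - m ^ (k + 3) / (2 * (k + 3)) := by
  have hk : (0 : ℝ) < k + 1 := by positivity
  have hslack : 0 ≤ (k + 3) - m ^ 2 * (k + 1) := by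
    have := mul_le_mul_of_nonneg_right hm2 hk.le
    rw [add_mul, div_mul_cancel₀ _ hk.ne'] at this
    linarith
  have hdiff : m ^ (k + 1) / (k + 1) - m ^ (k + 3) / (2 * (k + 3)) - m ^ (k + 1) / (2 * (k + 1))
      = m ^ (k + 1) * ((k + 3) - m ^ 2 * (k + 1)) / (2 * (k + 1) * (k + 3)) := by
    field_simp
    ring
  have : 0 ≤ m ^ (k + 1) * ((k + 3) - m ^ 2 * (k + 1)) / (2 * (k + 1) * (k + 3)) := by
    positivity
  linarith

/-- for every integer `K ≥ 1` and every `ε > 0`,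
`∫_0^ε e^{-r²/2} r^{K-1} dr ≥ (1/(2K)) · min{ε, √(1 + 2/K)}^K`. -/
theorem gaussian_radial_integral_lower_bound (K : ℕ) (hK : 1 ≤ K) (ε : ℝ) (hε : 0 < ε) :
    (1 / (2 * (K : ℝ))) * min ε (Real.sqrt (1 + 2 / (K : ℝ))) ^ K ≤
      ∫ r in (0:ℝ)..ε, Real.exp (-r ^ 2 / 2) * r ^ (K - 1) := by
  obtain ⟨k, rfl⟩ : ∃ k, K = k + 1 := ⟨K - 1, by omega⟩
  set m := min ε (√(1 + 2 / ((k + 1 : ℕ) : ℝ)))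
  have hm : 0 ≤ m := le_min hε.le (sqrt_nonneg _)
  have hm2 : m ^ 2 ≤ 1 + 2 / ((k : ℝ) + 1) := by
    exact_mod_cast (le_sqrt hm (by positivity)).mp (min_le_right ε _)
  calc 1 / (2 * ((k + 1 : ℕ) : ℝ)) * m ^ (k + 1) = m ^ (k + 1) / (2 * (k + 1)) := by
        push_cast; ring
    _ ≤ m ^ (k + 1) / (k + 1) - m ^ (k + 3) / (2 * (k + 3)) :=
        pow_div_two_mul_le_pow_div_sub_pow_div k hm hm2
    _ = ∫ r in (0 : ℝ)..m, (1 - r ^ 2 / 2) * r ^ k :=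
        (integral_one_sub_sq_div_two_mul_pow k m).symm
    _ ≤ ∫ r in (0 : ℝ)..ε, exp (-r ^ 2 / 2) * r ^ (k + 1 - 1) :=
        integral_one_sub_sq_div_two_mul_pow_le_integral_exp k hm (min_le_left _ _)
end

section
/- Let t > 0, let 1 ≤ m ≤ M be integers, and let f : (0,∞) → ℝ be such that n ↦ f(t/n)/n is non-increasing for n ∈ [m, M]. Suppose there exists F_M ≤ μ* with Φ*(F_M) = f(t/M)/M. Then Pr( ∃ n with m ≤ n < M such that F̂_n ≤ μ* and Φ*(F̂_n) ≥ f(t/n)/n ) ≤ exp( −(m/M) f(t/M) ). -/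
open MeasureTheory Real Set ProbabilityTheory
open scoped ENNReal BigOperators

noncomputable section

/-- The log-partition function of the canonical one-dimensional exponential family. -/
noncomputable def psi1 (ν₀ : Measure ℝ) (θ : ℝ) : ℝ :=
  Real.log ((∫⁻ x, ENNReal.ofReal (Real.exp (θ * x)) ∂ν₀).toReal)

/-- The parameter set `Θ_D` of the canonical one-dimensional family. -/
def ThetaD1 (ν₀ : Measure ℝ) : Set ℝ :=
  {θ | (∫⁻ x, ENNReal.ofReal (Real.exp (θ * x)) ∂ν₀) < ⊤}

/-- The member `ν_θ` of the family, with density `x ↦ exp(θ x - ψ(θ))` w.r.t. `ν₀`. -/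
noncomputable def nuP1 (ν₀ : Measure ℝ) (θ : ℝ) : Measure ℝ :=
  ν₀.withDensity (fun x => ENNReal.ofReal (Real.exp (θ * x - psi1 ν₀ θ)))

/-- The Fenchel–Legendre dual `Φ*(y) = sup_η (η y - Φ(η))` of `Φ(η) = ψ(θ*+η) - ψ(θ*)`,
where `Φ = +∞` outside of `Θ_D - θ*` (those `η` do not contribute). -/
noncomputable def phiStar1 (ν₀ : Measure ℝ) (θstar : ℝ) (y : ℝ) : ℝ :=
  sSup {r | ∃ η : ℝ, θstar + η ∈ ThetaD1 ν₀ ∧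
    r = η * y - psi1 ν₀ (θstar + η) + psi1 ν₀ θstar}

/-- `X` is an i.i.d. sequence with common law `ν` under `P`. -/
def IsIID1 {Ω : Type*} [MeasurableSpace Ω] (P : Measure Ω) (X : ℕ → Ω → ℝ)
    (ν : Measure ℝ) : Prop :=
  (∀ i, Measurable (X i)) ∧
    iIndepFun X P ∧
    ∀ i, P.map (X i) = ν

/-- The empirical mean `F̂_n = (1/n) Σ_{i<n} X_i`. -/
noncomputable def empMean {Ω : Type*} (X : ℕ → Ω → ℝ) (n : ℕ) (ω : Ω) : ℝ :=
  (n : ℝ)⁻¹ * ∑ i ∈ Finset.range n, X i ω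

/-!
Write `ν = ν_{θ*}` and `Φ(η) = ψ(θ* + η) - ψ(θ*)`. Then `ν` is the exponential tilt of `ν₀`, `Φ` is
the cumulant generating function of `ν`, and `μ* = ψ'(θ*)` is the mean of `ν`; Jensen's inequality
gives `η μ* ≤ Φ(η)`. Consequently `Φ*` is convex, vanishes at `μ*`, and strictly decreases on the
part of `(-∞, μ*]` where it is positive. So `F̂_n ≤ μ*` and
`Φ*(F̂_n) ≥ f(t/n)/n ≥ f(t/M)/M = Φ*(F_M) > 0` force `F̂_n ≤ F_M`.

Given `0 ≤ c < Φ*(F_M)`, take `η < 0` with `η F_M - Φ(η) > c`. On the event, the nonnegative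
mean-one martingale `exp (η S_n - n Φ(η))` then reaches `exp (n c) ≥ exp (m c)` for some
`n ∈ [m, M)`, which has probability at most `exp (-m c)` by Doob's maximal inequality. Letting
`c ↑ Φ*(F_M)` gives the claim.
-/

open Filter Topology

namespace ProbabilityTheory

variable {Ω : Type*} [MeasurableSpace Ω] {X : Ω → ℝ} {μ : Measure Ω} {t u : ℝ}

lemma mgf_tilted_mul (t u : ℝ) :
    mgf X (μ.tilted (t * X ·)) u = mgf X μ (t + u) / mgf X μ t := by
  simp only [mgf, integral_exp_tilted, Pi.add_apply, add_mul]

lemma cgf_tilted_mul [NeZero μ] (ht : t ∈ integrableExpSet X μ)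
    (htu : t + u ∈ integrableExpSet X μ) :
    cgf X (μ.tilted (t * X ·)) u = cgf X μ (t + u) - cgf X μ t := by
  rw [cgf, mgf_tilted_mul, log_div (mgf_pos_iff.2 htu).ne' (mgf_pos_iff.2 ht).ne', cgf, cgf]

lemma mul_integral_le_cgf [IsProbabilityMeasure μ] (hX : Integrable X μ)
    (ht : t ∈ integrableExpSet X μ) : t * μ[X] ≤ cgf X μ t := by
  have jensen : exp (∫ ω, t * X ω ∂μ) ≤ ∫ ω, exp (t * X ω) ∂μ :=
    convexOn_exp.map_integral_le continuousOn_exp isClosed_univ (by simp) (hX.const_mul t) ht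
  rw [integral_const_mul] at jensen
  exact (le_log_iff_exp_le (mgf_pos ht)).2 jensen

lemma mul_deriv_cgf_le (ht : t ∈ interior (integrableExpSet X μ))
    (htu : t + u ∈ integrableExpSet X μ) :
    u * deriv (cgf X μ) t ≤ cgf X μ (t + u) - cgf X μ t := by
  rcases eq_zero_or_neZero μ with rfl | hμ
  · simp
  have ht' : t ∈ integrableExpSet X μ := interior_subset ht
  have := isProbabilityMeasure_tilted ht'
  rw [← integral_tilted_mul_self ht, ← cgf_tilted_mul ht' htu]
  refine mul_integral_le_cgf ((memLp_tilted_mul ht 1).integrable le_rfl) ?_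
  refine (integrable_tilted_iff ht' _).2 ?_
  simpa only [smul_eq_mul, ← exp_add, ← add_mul] using integrable_of_mem_integrableExpSet htu

end ProbabilityTheory

section ExponentialFamily

variable {ν₀ : Measure ℝ} {θ η : ℝ}

-- Off `Θ_D` both sides are the junk value `log 0 = 0`.
lemma psi1_eq_cgf (ν₀ : Measure ℝ) : psi1 ν₀ = cgf id ν₀ := by
  ext θ
  rw [psi1, cgf, mgf, integral_eq_lintegral_of_nonneg_ae (ae_of_all _ fun _ ↦ (exp_pos _).le)
    (by fun_prop)]
  rfl

lemma thetaD1_eq_integrableExpSet (ν₀ : Measure ℝ) : ThetaD1 ν₀ = integrableExpSet id ν₀ := by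
  ext θ
  rw [ThetaD1, mem_ofPred_eq, lt_top_iff_ne_top, lintegral_ofReal_ne_top_iff_integrable
    (by fun_prop) (ae_of_all _ fun _ ↦ (exp_pos _).le)]
  rfl

lemma nuP1_eq_tilted (hθ : θ ∈ ThetaD1 ν₀) : nuP1 ν₀ θ = ν₀.tilted (θ * ·) := by
  rcases eq_zero_or_neZero ν₀ with rfl | hν₀
  · simp [nuP1]
  rw [thetaD1_eq_integrableExpSet] at hθ
  simp_rw [nuP1, Measure.tilted, exp_sub, psi1_eq_cgf, exp_cgf hθ]
  rfl

lemma mul_deriv_psi1_le (hθ : θ ∈ interior (ThetaD1 ν₀)) (hη : θ + η ∈ ThetaD1 ν₀) :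
    η * deriv (psi1 ν₀) θ ≤ psi1 ν₀ (θ + η) - psi1 ν₀ θ := by
  rw [thetaD1_eq_integrableExpSet] at hθ hη
  rw [psi1_eq_cgf]
  exact mul_deriv_cgf_le hθ hη

lemma mgf_eq_exp_psi1_sub {Ω : Type*} [MeasurableSpace Ω] {P : Measure Ω}
    [IsProbabilityMeasure P] {Y : Ω → ℝ} (hY : Measurable Y) (hlaw : P.map Y = nuP1 ν₀ θ)
    (hθ : θ ∈ ThetaD1 ν₀) (hη : θ + η ∈ ThetaD1 ν₀) :
    mgf Y P η = exp (psi1 ν₀ (θ + η) - psi1 ν₀ θ) := by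
  rcases eq_zero_or_neZero ν₀ with rfl | hν₀
  · have := Measure.isProbabilityMeasure_map (μ := P) hY.aemeasurable
    rw [hlaw] at this
    exact absurd (by simp [nuP1]) (IsProbabilityMeasure.ne_zero (nuP1 0 θ))
  rw [← mgf_id_map hY.aemeasurable, hlaw, nuP1_eq_tilted hθ]
  rw [thetaD1_eq_integrableExpSet] at hθ hη
  rw [exp_sub, psi1_eq_cgf, exp_cgf hθ, exp_cgf hη]
  exact mgf_tilted_mul θ η

end ExponentialFamily

section LegendreDual

variable {ν₀ : Measure ℝ} {θstar μ₀ : ℝ}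

lemma zero_mem_phiStar1_set (hθ : θstar ∈ ThetaD1 ν₀) (y : ℝ) :
    (0 : ℝ) ∈ {r | ∃ η : ℝ, θstar + η ∈ ThetaD1 ν₀ ∧
      r = η * y - psi1 ν₀ (θstar + η) + psi1 ν₀ θstar} :=
  ⟨0, by simpa using hθ, by simp⟩

lemma le_phiStar1 {y η : ℝ} (hpos : 0 < phiStar1 ν₀ θstar y) (hη : θstar + η ∈ ThetaD1 ν₀) :
    η * y - psi1 ν₀ (θstar + η) + psi1 ν₀ θstar ≤ phiStar1 ν₀ θstar y := by
  refine le_csSup ?_ ⟨η, hη, rfl⟩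
  by_contra hbdd
  rw [phiStar1, Real.sSup_of_not_bddAbove hbdd] at hpos
  exact hpos.false

lemma phiStar1_lt_of_lt (hθ : θstar ∈ ThetaD1 ν₀)
    (hsub : ∀ η, θstar + η ∈ ThetaD1 ν₀ → η * μ₀ ≤ psi1 ν₀ (θstar + η) - psi1 ν₀ θstar)
    {x y : ℝ} (hxy : x < y) (hy : y ≤ μ₀)
    (hpos : 0 < phiStar1 ν₀ θstar x) : phiStar1 ν₀ θstar y < phiStar1 ν₀ θstar x := by
  set s := (μ₀ - y) / (μ₀ - x)
  have hs0 : 0 ≤ s := div_nonneg (by linarith) (by linarith)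
  have hs1 : s < 1 := (div_lt_one (by linarith)).2 (by linarith)
  -- `y` lies between `x` and `μ₀`, where every term of the supremum is `≤ 0` by `hsub`.
  have hy_eq : y = s * x + (1 - s) * μ₀ := by
    have : μ₀ - x ≠ 0 := by linarith
    simp only [s]; field_simp; ring
  calc phiStar1 ν₀ θstar y ≤ s * phiStar1 ν₀ θstar x := by
        refine csSup_le ⟨0, zero_mem_phiStar1_set hθ y⟩ ?_
        rintro r ⟨η, hη, rfl⟩
        have hx := le_phiStar1 hpos hη
        have hμ₀ := hsub η hη
        rw [hy_eq]
        nlinarith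
    _ < phiStar1 ν₀ θstar x := by nlinarith

lemma exists_neg_lt_of_lt_phiStar1 (hθ : θstar ∈ ThetaD1 ν₀)
    (hsub : ∀ η, θstar + η ∈ ThetaD1 ν₀ → η * μ₀ ≤ psi1 ν₀ (θstar + η) - psi1 ν₀ θstar)
    {x c : ℝ} (hx : x ≤ μ₀) (hc : 0 ≤ c)
    (hcx : c < phiStar1 ν₀ θstar x) :
    ∃ η < 0, θstar + η ∈ ThetaD1 ν₀ ∧ c < η * x - psi1 ν₀ (θstar + η) + psi1 ν₀ θstar := by
  obtain ⟨r, ⟨η, hη, rfl⟩, hcr⟩ := exists_lt_of_lt_csSup ⟨0, zero_mem_phiStar1_set hθ x⟩ hcx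
  refine ⟨η, not_le.1 fun hη0 ↦ ?_, hη, hcr⟩
  have := hsub η hη
  nlinarith [mul_le_mul_of_nonneg_left hx hη0]

end LegendreDual

open Finset in
lemma MeasureTheory.Submartingale.measure_exists_ge_le {Ω : Type*} {m0 : MeasurableSpace Ω}
    {P : Measure Ω} [IsFiniteMeasure P] {𝓕 : Filtration ℕ m0} {W : ℕ → Ω → ℝ}
    (hW : Submartingale W 𝓕 P) (hnonneg : 0 ≤ W) {lam : ℝ} (hlam : 0 < lam) (N : ℕ) :
    P {ω | ∃ k ≤ N, lam ≤ W k ω} ≤ ENNReal.ofReal (P[W N] / lam) := by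
  have hset : {ω | ∃ k ≤ N, lam ≤ W k ω} =
      {ω | (lam.toNNReal : ℝ) ≤ (range (N + 1)).sup' nonempty_range_add_one fun k ↦ W k ω} := by
    ext ω
    simp [Real.coe_toNNReal _ hlam.le, le_sup'_iff]
  have hmax := (maximal_ineq hW hnonneg (ε := lam.toNNReal) N).trans
    (ENNReal.ofReal_le_ofReal (setIntegral_le_integral (hW.integrable N) (ae_of_all _ (hnonneg N))))
  rw [← hset] at hmax
  change ENNReal.ofReal lam * _ ≤ _ at hmax
  rw [ENNReal.ofReal_div_of_pos hlam,
    ENNReal.le_div_iff_mul_le (.inl (by simpa using hlam)) (.inl ENNReal.ofReal_ne_top), mul_comm]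
  exact hmax

namespace ProbabilityTheory

open Finset

variable {Ω : Type*} {X : ℕ → Ω → ℝ} {η L : ℝ}

/-- Indexed so that the `k`-th term involves `X 0, …, X k`; it is then adapted to the natural
filtration of `X`. -/
def exponentialProcess (X : ℕ → Ω → ℝ) (η L : ℝ) (k : ℕ) (ω : Ω) : ℝ :=
  exp (η * ∑ i ∈ range (k + 1), X i ω - (k + 1) * L)

lemma exponentialProcess_succ (k : ℕ) (ω : Ω) :
    exponentialProcess X η L (k + 1) ω =
      exponentialProcess X η L k ω * exp (η * X (k + 1) ω - L) := by
  simp only [exponentialProcess, ← exp_add, sum_range_succ _ (k + 1)]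
  push_cast
  ring_nf

lemma exponentialProcess_eq_mul (k : ℕ) :
    exponentialProcess X η L k =
      fun ω ↦ exp (-((k + 1) * L)) * exp (η * (∑ i ∈ range (k + 1), X i) ω) := by
  ext ω
  simp only [exponentialProcess, ← exp_add, Finset.sum_apply]
  ring_nf

lemma exponentialProcess_eq_exp_empMean (η L : ℝ) (k : ℕ) (ω : Ω) :
    exponentialProcess X η L k ω = exp ((k + 1) * (η * empMean X (k + 1) ω - L)) := by
  rw [exponentialProcess, empMean]
  push_cast
  field_simp

variable [MeasurableSpace Ω] {P : Measure Ω}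

lemma integrable_exponentialProcess [IsProbabilityMeasure P] (hXm : ∀ i, Measurable (X i))
    (hind : iIndepFun X P)
    (hmgf : ∀ i, mgf (X i) P η = exp L) (k : ℕ) :
    Integrable (exponentialProcess X η L k) P := by
  rw [exponentialProcess_eq_mul]
  refine (hind.integrable_exp_mul_sum hXm fun i _ ↦ ?_).const_mul _
  exact mgf_pos_iff.1 ((hmgf i).symm ▸ exp_pos L)

lemma integral_exponentialProcess (hXm : ∀ i, Measurable (X i)) (hind : iIndepFun X P)
    (hmgf : ∀ i, mgf (X i) P η = exp L) (k : ℕ) :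
    ∫ ω, exponentialProcess X η L k ω ∂P = 1 := by
  rw [exponentialProcess_eq_mul, integral_const_mul, ← mgf, hind.mgf_sum hXm,
    prod_congr rfl fun i _ ↦ hmgf i, prod_const, card_range, ← exp_nat_mul, ← exp_add]
  simp

lemma martingale_exponentialProcess [IsProbabilityMeasure P] (hXm : ∀ i, Measurable (X i))
    (hind : iIndepFun X P)
    (hmgf : ∀ i, mgf (X i) P η = exp L) :
    Martingale (exponentialProcess X η L)
      (Filtration.natural X fun i ↦ (hXm i).stronglyMeasurable) P := by
  set 𝓕 := Filtration.natural X fun i ↦ (hXm i).stronglyMeasurable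
  have hadapted : StronglyAdapted 𝓕 (exponentialProcess X η L) := by
    intro k
    refine (Measurable.exp ((Measurable.const_mul ?_ η).sub_const _)).stronglyMeasurable
    refine Finset.measurable_sum _ fun i hi ↦ ?_
    exact ((Filtration.stronglyAdapted_natural _ i).measurable).mono
      (𝓕.mono (Nat.lt_succ_iff.1 (mem_range.1 hi))) le_rfl
  refine martingale_nat hadapted (integrable_exponentialProcess hXm hind hmgf) fun k ↦ ?_
  set Z : Ω → ℝ := fun ω ↦ exp (η * X (k + 1) ω - L)
  have hZ_eq : Z = fun ω ↦ exp (-L) * exp (η * X (k + 1) ω) := by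
    ext ω
    rw [← exp_add, neg_add_eq_sub]
  have hZ_int : Integrable Z P :=
    hZ_eq ▸ (mgf_pos_iff.1 ((hmgf (k + 1)).symm ▸ exp_pos L)).const_mul _
  have hZ_mean : ∫ ω, Z ω ∂P = 1 := by
    rw [hZ_eq, integral_const_mul, ← mgf, hmgf, ← exp_add, neg_add_cancel, exp_zero]
  have hZ_indep : P[Z | 𝓕 k] =ᵐ[P] fun _ ↦ 1 := by
    rw [← hZ_mean]
    refine condExp_indep_eq (hXm (k + 1)).comap_le (𝓕.le k) ?_
      (hind.indep_comap_natural_of_lt _ k.lt_succ_self)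
    exact (((measurable_const_mul η).sub_const L).exp.comp (comap_measurable _)).stronglyMeasurable
  have hpull : P[exponentialProcess X η L (k + 1) | 𝓕 k] =ᵐ[P]
      exponentialProcess X η L k * P[Z | 𝓕 k] := by
    have : exponentialProcess X η L (k + 1) = exponentialProcess X η L k * Z :=
      funext (exponentialProcess_succ k)
    rw [this]
    exact condExp_mul_of_stronglyMeasurable_left (hadapted k)
      (this ▸ integrable_exponentialProcess hXm hind hmgf (k + 1)) hZ_int
  filter_upwards [hpull, hZ_indep] with ω h1 h2
  simp [h1, h2]

end ProbabilityTheory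

section BoundaryCrossing

variable {ν₀ : Measure ℝ} {θstar FM : ℝ} {Ω : Type*} [MeasurableSpace Ω] {P : Measure Ω}
  [IsProbabilityMeasure P] {X : ℕ → Ω → ℝ} {m : ℕ}

lemma measure_exists_phiStar1_ge_le_of_lt (hθstar : θstar ∈ interior (ThetaD1 ν₀))
    (hFM : FM ≤ deriv (psi1 ν₀) θstar) (hXm : ∀ i, Measurable (X i)) (hind : iIndepFun X P)
    (hlaw : ∀ i, P.map (X i) = nuP1 ν₀ θstar) (hm : 1 ≤ m) (M : ℕ) {c : ℝ} (hc0 : 0 ≤ c)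
    (hc : c < phiStar1 ν₀ θstar FM) :
    P {ω | ∃ n : ℕ, m ≤ n ∧ n < M ∧ empMean X n ω ≤ deriv (psi1 ν₀) θstar ∧
        phiStar1 ν₀ θstar FM ≤ phiStar1 ν₀ θstar (empMean X n ω)}
      ≤ ENNReal.ofReal (exp (-(m * c))) := by
  have hθ : θstar ∈ ThetaD1 ν₀ := interior_subset hθstar
  have hsub := fun η (hη : θstar + η ∈ ThetaD1 ν₀) ↦ mul_deriv_psi1_le hθstar hη
  obtain ⟨η, hη0, hη, hcη⟩ := exists_neg_lt_of_lt_phiStar1 hθ hsub hFM hc0 hc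
  set L := psi1 ν₀ (θstar + η) - psi1 ν₀ θstar
  have hmgf : ∀ i, mgf (X i) P η = exp L := fun i ↦ mgf_eq_exp_psi1_sub (hXm i) (hlaw i) hθ hη
  have hW := martingale_exponentialProcess hXm hind hmgf
  calc _ ≤ P {ω | ∃ k ≤ M, exp (m * c) ≤ exponentialProcess X η L k ω} := by
        refine measure_mono ?_
        rintro ω ⟨n, hmn, hnM, hy, hge⟩
        obtain ⟨k, rfl⟩ : ∃ k, n = k + 1 := Nat.exists_eq_add_of_le' (hm.trans hmn)
        refine ⟨k, by omega, ?_⟩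
        have hyFM : empMean X (k + 1) ω ≤ FM := le_of_not_gt fun hlt ↦
          (phiStar1_lt_of_lt hθ hsub hlt hy (hc0.trans_lt hc)).not_ge hge
        have hmk : (m : ℝ) ≤ k + 1 := by exact_mod_cast hmn
        rw [exponentialProcess_eq_exp_empMean, exp_le_exp]
        calc (m : ℝ) * c ≤ (k + 1) * c := by gcongr
          _ ≤ (k + 1) * (η * empMean X (k + 1) ω - L) := by
            gcongr
            nlinarith
    _ ≤ ENNReal.ofReal (P[exponentialProcess X η L M] / exp (m * c)) :=
        hW.submartingale.measure_exists_ge_le (fun _ _ ↦ (exp_pos _).le) (exp_pos _) M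
    _ = ENNReal.ofReal (exp (-(m * c))) := by
        rw [integral_exponentialProcess hXm hind hmgf, one_div, exp_neg]

lemma measure_exists_phiStar1_ge_le (hθstar : θstar ∈ interior (ThetaD1 ν₀))
    (hFM : FM ≤ deriv (psi1 ν₀) θstar) (hXm : ∀ i, Measurable (X i)) (hind : iIndepFun X P)
    (hlaw : ∀ i, P.map (X i) = nuP1 ν₀ θstar) (hm : 1 ≤ m) (M : ℕ) :
    P {ω | ∃ n : ℕ, m ≤ n ∧ n < M ∧ empMean X n ω ≤ deriv (psi1 ν₀) θstar ∧
        phiStar1 ν₀ θstar FM ≤ phiStar1 ν₀ θstar (empMean X n ω)}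
      ≤ ENNReal.ofReal (exp (-(m * phiStar1 ν₀ θstar FM))) := by
  rcases le_or_gt (phiStar1 ν₀ θstar FM) 0 with hneg | hpos
  · refine prob_le_one.trans (ENNReal.one_le_ofReal.2 (one_le_exp ?_))
    nlinarith [(Nat.cast_nonneg m : (0 : ℝ) ≤ m)]
  have hlim : Tendsto (fun c : ℝ ↦ ENNReal.ofReal (exp (-(m * c))))
      (𝓝[<] (phiStar1 ν₀ θstar FM)) (𝓝 (ENNReal.ofReal (exp (-(m * phiStar1 ν₀ θstar FM))))) :=
    ((ENNReal.continuous_ofReal.comp (by fun_prop)).tendsto _).mono_left nhdsWithin_le_nhds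
  refine ge_of_tendsto hlim ?_
  filter_upwards [Ioo_mem_nhdsLT hpos] with c hc
  exact measure_exists_phiStar1_ge_le_of_lt hθstar hFM hXm hind hlaw hm M hc.1.le hc.2

end BoundaryCrossing

theorem dim1_boundary_crossing_general (ν₀ : Measure ℝ)
    (θstar : ℝ) (hθstar : θstar ∈ interior (ThetaD1 ν₀))
    (t : ℝ) (m M : ℕ) (hm : 1 ≤ m)
    (f : ℝ → ℝ)
    (hf : ∀ n n' : ℕ, m ≤ n → n ≤ n' → n' ≤ M →
      f (t / (n' : ℝ)) / (n' : ℝ) ≤ f (t / (n : ℝ)) / (n : ℝ))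
    (FM : ℝ) (hFM : FM ≤ deriv (psi1 ν₀) θstar)
    (hFMeq : phiStar1 ν₀ θstar FM = f (t / (M : ℝ)) / (M : ℝ))
    {Ω : Type*} [MeasurableSpace Ω] (P : Measure Ω) [IsProbabilityMeasure P]
    (X : ℕ → Ω → ℝ) (hX : IsIID1 P X (nuP1 ν₀ θstar)) :
    P {ω | ∃ n : ℕ, m ≤ n ∧ n < M ∧ empMean X n ω ≤ deriv (psi1 ν₀) θstar ∧
        phiStar1 ν₀ θstar (empMean X n ω) ≥ f (t / (n : ℝ)) / (n : ℝ)}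
      ≤ ENNReal.ofReal (Real.exp (-((m : ℝ) / (M : ℝ)) * f (t / (M : ℝ)))) := by
  obtain ⟨hXm, hind, hlaw⟩ := hX
  have hexponent : -((m : ℝ) / M) * f (t / M) = -(m * phiStar1 ν₀ θstar FM) := by
    rw [hFMeq]; ring
  rw [hexponent]
  refine (measure_mono ?_).trans (measure_exists_phiStar1_ge_le hθstar hFM hXm hind hlaw hm M)
  rintro ω ⟨n, hmn, hnM, hy, hge⟩
  exact ⟨n, hmn, hnM, hy, hFMeq ▸ (hf n M hmn hnM.le le_rfl).trans hge⟩

/-- Dimension 1: if `n ↦ f(t/n)/n` is non-increasing on `[m, M]` and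
there is `F_M ≤ μ*` with `Φ*(F_M) = f(t/M)/M`, then
`Pr(∃ n, m ≤ n < M, F̂_n ≤ μ* and Φ*(F̂_n) ≥ f(t/n)/n) ≤ exp(-(m/M) f(t/M))`. -/
theorem dim1_boundary_crossing (ν₀ : Measure ℝ) [SigmaFinite ν₀]
    (θstar : ℝ) (hθstar : θstar ∈ interior (ThetaD1 ν₀))
    (t : ℝ) (ht : 0 < t) (m M : ℕ) (hm : 1 ≤ m) (hmM : m ≤ M)
    (f : ℝ → ℝ)
    (hf : ∀ n n' : ℕ, m ≤ n → n ≤ n' → n' ≤ M →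
      f (t / (n' : ℝ)) / (n' : ℝ) ≤ f (t / (n : ℝ)) / (n : ℝ))
    (FM : ℝ) (hFM : FM ≤ deriv (psi1 ν₀) θstar)
    (hFMeq : phiStar1 ν₀ θstar FM = f (t / (M : ℝ)) / (M : ℝ))
    {Ω : Type*} [MeasurableSpace Ω] (P : Measure Ω) [IsProbabilityMeasure P]
    (X : ℕ → Ω → ℝ) (hX : IsIID1 P X (nuP1 ν₀ θstar)) :
    P {ω | ∃ n : ℕ, m ≤ n ∧ n < M ∧ empMean X n ω ≤ deriv (psi1 ν₀) θstar ∧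
        phiStar1 ν₀ θstar (empMean X n ω) ≥ f (t / (n : ℝ)) / (n : ℝ)}
      ≤ ENNReal.ofReal (Real.exp (-((m : ℝ) / (M : ℝ)) * f (t / (M : ℝ)))) :=
  dim1_boundary_crossing_general ν₀ θstar hθstar t m M hm f hf FM hFM hFMeq P X hX
end
end
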